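/- arXiv:2204.00160 — 8 statements merged into one kernel-verified Lean document; each statement's English description precedes it below -/
import Mathlib

section
/- Let (g,[·,·,·]_g,T) be a Rota-Baxter 3-Lie algebra of weight λ and (M,ρ,T_M) a representation of it. Define on the vector space g⊕M the trilinear bracket [x+u, y+v, z+w] := [x,y,z]_g + ρ(x,y)w + ρ(y,z)u + ρ(z,x)v for x,y,z ∈ g and u,v,w ∈ M, and the linear operator (T⊕T_M)(x+u) := T(x) + T_M(u). Then (g⊕M, [·,·,·], T⊕T_M) is a Rota-Baxter 3-Lie algebra of weight λ (the semidirect product). -/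
/-!
Basic notions for Rota-Baxter 3-Lie algebras of arbitrary weight,
following Guo–Qin–Wang–Zhou.
-/

namespace RBPaper

section Defs

variable (k : Type*) [Field k]
variable {g M E g₀ g₁ : Type*}
variable [AddCommGroup g] [Module k g] [AddCommGroup M] [Module k M]
variable [AddCommGroup E] [Module k E]
variable [AddCommGroup g₀] [Module k g₀] [AddCommGroup g₁] [Module k g₁]

/-- A map `g → g → g → M` is trilinear. -/
structure Trilinear (f : g → g → g → M) : Prop where
  lin₁ : ∀ y z, IsLinearMap k fun x => f x y z
  lin₂ : ∀ x z, IsLinearMap k fun y => f x y z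
  lin₃ : ∀ x y, IsLinearMap k fun z => f x y z

/-- A map of three arguments is alternating: it vanishes whenever two arguments coincide. -/
structure Alternating3 (f : g → g → g → M) : Prop where
  alt₁₂ : ∀ x y, f x x y = 0
  alt₂₃ : ∀ x y, f x y y = 0
  alt₁₃ : ∀ x y, f x y x = 0

/-- The Fundamental Identity of a ternary bracket. -/
def FundamentalIdentity (f : g → g → g → g) : Prop :=
  ∀ x₁ x₂ x₃ x₄ x₅, f x₁ x₂ (f x₃ x₄ x₅) =
    f (f x₁ x₂ x₃) x₄ x₅ + f x₃ (f x₁ x₂ x₄) x₅ + f x₃ x₄ (f x₁ x₂ x₅)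

/-- `f` is a 3-Lie algebra bracket on `g`. -/
structure Is3LieAlgebra (f : g → g → g → g) : Prop where
  tri : Trilinear k f
  alt : Alternating3 f
  fi : FundamentalIdentity f

/-- `T` is a Rota-Baxter operator of weight `lam` on `(g, f)`. -/
def IsRotaBaxterOp (lam : k) (f : g → g → g → g) (T : g → g) : Prop :=
  ∀ x y z, f (T x) (T y) (T z) =
    T (f (T x) (T y) z + f (T x) y (T z) + f x (T y) (T z) +
       lam • f (T x) y z + lam • f x (T y) z + lam • f x y (T z) +
       (lam * lam) • f x y z)

/-- `(g, f, T)` is a Rota-Baxter 3-Lie algebra of weight `lam`. -/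
structure IsRBThreeLie (lam : k) (f : g → g → g → g) (T : g → g) : Prop where
  lie : Is3LieAlgebra k f
  linT : IsLinearMap k T
  rb : IsRotaBaxterOp k lam f T

/-- `(M, ρ)` is a representation of the 3-Lie algebra `(g, f)`. -/
structure IsRep (f : g → g → g → g) (ρ : g → g → M → M) : Prop where
  lin₁ : ∀ y m, IsLinearMap k fun x => ρ x y m
  lin₂ : ∀ x m, IsLinearMap k fun y => ρ x y m
  lin₃ : ∀ x y, IsLinearMap k (ρ x y)
  alt : ∀ x m, ρ x x m = 0
  rep₁ : ∀ x₁ x₂ x₃ x₄ m, ρ x₁ x₂ (ρ x₃ x₄ m) =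
      ρ (f x₁ x₂ x₃) x₄ m + ρ x₃ (f x₁ x₂ x₄) m + ρ x₃ x₄ (ρ x₁ x₂ m)
  rep₂ : ∀ x₁ x₂ x₃ x₄ m, ρ x₁ (f x₂ x₃ x₄) m =
      ρ x₃ x₄ (ρ x₁ x₂ m) - ρ x₂ x₄ (ρ x₁ x₃ m) + ρ x₂ x₃ (ρ x₁ x₄ m)

/-- `(M, ρ, TM)` is a representation of the Rota-Baxter 3-Lie algebra
`(g, f, T)` of weight `lam`. -/
structure IsRBRep (lam : k) (f : g → g → g → g) (T : g → g)
    (ρ : g → g → M → M) (TM : M → M) : Prop where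
  rep : IsRep k f ρ
  linTM : IsLinearMap k TM
  rb : ∀ x y m, ρ (T x) (T y) (TM m) =
    TM (ρ (T x) (T y) m + ρ (T x) y (TM m) + ρ x (T y) (TM m) +
        lam • ρ (T x) y m + lam • ρ x (T y) m + lam • ρ x y (TM m) +
        (lam * lam) • ρ x y m)

/-- The derived bracket `[x,y,z]_T` of a Rota-Baxter 3-Lie algebra. -/
def derBracket (lam : k) (f : g → g → g → g) (T : g → g) : g → g → g → g :=
  fun x y z =>
    f (T x) (T y) z + f (T x) y (T z) + f x (T y) (T z) +
      lam • f (T x) y z + lam • f x (T y) z + lam • f x y (T z) +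
      (lam * lam) • f x y z

/-- A 2-cocycle `(ψ, χ)` of the Rota-Baxter 3-Lie algebra `(g, f, T)` of weight `lam`
with coefficients in the representation `(M, ρ, TM)`. -/
structure IsTwoCocycle (lam : k) (f : g → g → g → g) (T : g → g)
    (ρ : g → g → M → M) (TM : M → M) (ψ : g → g → g → M) (χ : g → M) : Prop where
  tri : Trilinear k ψ
  alt : Alternating3 ψ
  lin : IsLinearMap k χ
  c1 : ∀ x₁ x₂ x₃ x₄ x₅,
    ρ x₁ x₂ (ψ x₃ x₄ x₅) + ψ x₁ x₂ (f x₃ x₄ x₅) =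
      ψ (f x₁ x₂ x₃) x₄ x₅ + ψ x₃ (f x₁ x₂ x₄) x₅ + ψ x₃ x₄ (f x₁ x₂ x₅) +
        ρ x₄ x₅ (ψ x₁ x₂ x₃) + ρ x₅ x₃ (ψ x₁ x₂ x₄) + ρ x₃ x₄ (ψ x₁ x₂ x₅)
  c2 : ∀ x y z,
    ρ (T x) (T y) (χ z) + ρ (T z) (T x) (χ y) + ρ (T y) (T z) (χ x) +
        ψ (T x) (T y) (T z) =
      TM (ρ (T y) z (χ x) + ρ z (T x) (χ y) + ψ (T x) (T y) z) + χ (f (T x) (T y) z) +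
      TM (ρ (T x) y (χ z) + ρ y (T z) (χ x) + ψ (T x) y (T z)) + χ (f (T x) y (T z)) +
      TM (ρ x (T y) (χ z) + ρ (T z) x (χ y) + ψ x (T y) (T z)) + χ (f x (T y) (T z)) +
      lam • TM (ρ y z (χ x) + ψ (T x) y z) + lam • χ (f (T x) y z) +
      lam • TM (ρ z x (χ y) + ψ x (T y) z) + lam • χ (f x (T y) z) +
      lam • TM (ρ x y (χ z) + ψ x y (T z)) + lam • χ (f x y (T z)) +
      (lam * lam) • χ (f x y z) + (lam * lam) • TM (ψ x y z)

/-- A 1-parameter formal deformation `(μ_i, 𝒯_i)` of the Rota-Baxter 3-Lie algebra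
`(g, f, T)` of weight `lam`, given by its coefficientwise equations. -/
structure IsDeformation (lam : k) (f : g → g → g → g) (T : g → g)
    (μ : ℕ → g → g → g → g) (𝒯 : ℕ → g → g) : Prop where
  tri : ∀ i, Trilinear k (μ i)
  alt : ∀ i, Alternating3 (μ i)
  lin : ∀ i, IsLinearMap k (𝒯 i)
  μ₀ : μ 0 = f
  𝒯₀ : 𝒯 0 = T
  fi : ∀ n x₁ x₂ x₃ x₄ x₅,
    ∑ i ∈ Finset.range (n + 1), μ i x₁ x₂ (μ (n - i) x₃ x₄ x₅) =
      ∑ i ∈ Finset.range (n + 1),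
        (μ i (μ (n - i) x₁ x₂ x₃) x₄ x₅ + μ i x₃ (μ (n - i) x₁ x₂ x₄) x₅ +
          μ i x₃ x₄ (μ (n - i) x₁ x₂ x₅))
  rb : ∀ n x₁ x₂ x₃,
    (∑ i ∈ Finset.range (n + 1), ∑ j ∈ Finset.range (n - i + 1),
        ∑ l ∈ Finset.range (n - i - j + 1),
        μ i (𝒯 j x₁) (𝒯 l x₂) (𝒯 (n - i - j - l) x₃)) =
      (∑ i ∈ Finset.range (n + 1), ∑ j ∈ Finset.range (n - i + 1),
          ∑ l ∈ Finset.range (n - i - j + 1),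
          𝒯 i (μ j (𝒯 l x₁) (𝒯 (n - i - j - l) x₂) x₃ +
               μ j (𝒯 l x₁) x₂ (𝒯 (n - i - j - l) x₃) +
               μ j x₁ (𝒯 l x₂) (𝒯 (n - i - j - l) x₃))) +
        lam • (∑ i ∈ Finset.range (n + 1), ∑ j ∈ Finset.range (n - i + 1),
          𝒯 i (μ j (𝒯 (n - i - j) x₁) x₂ x₃ + μ j x₁ (𝒯 (n - i - j) x₂) x₃ +
               μ j x₁ x₂ (𝒯 (n - i - j) x₃))) +
        (lam * lam) • (∑ i ∈ Finset.range (n + 1), 𝒯 i (μ (n - i) x₁ x₂ x₃))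

/-- An abelian extension `0 → (M, TM) → (E, fE, TE) → (g, f, T) → 0`
of Rota-Baxter 3-Lie algebras of weight `lam`. -/
structure IsAbelianExt (lam : k) (f : g → g → g → g) (T : g → g) (TM : M → M)
    (fE : E → E → E → E) (TE : E → E) (i : M → E) (p : E → g) : Prop where
  base : IsRBThreeLie k lam f T
  total : IsRBThreeLie k lam fE TE
  linTM : IsLinearMap k TM
  lin_i : IsLinearMap k i
  lin_p : IsLinearMap k p
  i_rb : ∀ m, TE (i m) = i (TM m)
  p_bracket : ∀ a b c, p (fE a b c) = f (p a) (p b) (p c)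
  p_rb : ∀ a, p (TE a) = T (p a)
  inj : Function.Injective i
  surj : Function.Surjective p
  exact : ∀ a, p a = 0 ↔ a ∈ Set.range i
  abelian : ∀ (w : E) (n q : M), fE w (i n) (i q) = 0

/-- The semidirect-product type bracket on `g × M` twisted by `ψ`. -/
def extBracket (f : g → g → g → g) (ρ : g → g → M → M) (ψ : g → g → g → M) :
    g × M → g × M → g × M → g × M :=
  fun a b c =>
    (f a.1 b.1 c.1,
      ρ a.1 b.1 c.2 + ρ c.1 a.1 b.2 + ρ b.1 c.1 a.2 + ψ a.1 b.1 c.1)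

/-- The operator on `g × M` twisted by `χ`. -/
def extOp (T : g → g) (χ : g → M) (TM : M → M) : g × M → g × M :=
  fun a => (T a.1, χ a.1 + TM a.2)

/-- A Rota-Baxter 3-Lie 2-algebra of weight `lam` on the data
`(g₀, g₁, d, l3, l3m, l5, T0, T1, T2)`, where `l3m x y α` denotes the value of
the trilinear map `l3` with one argument `α` in `g₁` placed in the last slot
(the other placements being recovered by total skew-symmetry). -/
structure IsRB3Lie2Alg (lam : k) (d : g₁ → g₀) (l3 : g₀ → g₀ → g₀ → g₀)
    (l3m : g₀ → g₀ → g₁ → g₁) (l5 : g₀ → g₀ → g₀ → g₀ → g₀ → g₁)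
    (T0 : g₀ → g₀) (T1 : g₁ → g₁) (T2 : g₀ → g₀ → g₀ → g₁) : Prop where
  lin_d : IsLinearMap k d
  tri_l3 : Trilinear k l3
  alt_l3 : Alternating3 l3
  l3m_lin₁ : ∀ y α, IsLinearMap k fun x => l3m x y α
  l3m_lin₂ : ∀ x α, IsLinearMap k fun y => l3m x y α
  l3m_lin₃ : ∀ x y, IsLinearMap k (l3m x y)
  l3m_alt : ∀ x α, l3m x x α = 0
  l5_lin₁ : ∀ b c e e', IsLinearMap k fun a => l5 a b c e e'
  l5_lin₂ : ∀ a c e e', IsLinearMap k fun b => l5 a b c e e'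
  l5_lin₃ : ∀ a b e e', IsLinearMap k fun c => l5 a b c e e'
  l5_lin₄ : ∀ a b c e', IsLinearMap k fun e => l5 a b c e e'
  l5_lin₅ : ∀ a b c e, IsLinearMap k fun e' => l5 a b c e e'
  l5_alt₁₂ : ∀ a c e e', l5 a a c e e' = 0
  l5_alt₃₄ : ∀ a b c e', l5 a b c c e' = 0
  l5_alt₄₅ : ∀ a b c e, l5 a b c e e = 0
  l5_alt₃₅ : ∀ a b c e, l5 a b c e c = 0
  cond₁ : ∀ x y α, d (l3m x y α) = l3 x y (d α)
  cond₂ : ∀ x α β, l3m x (d α) β = - l3m x (d β) α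
  cond₃ : ∀ x₁ x₂ x₃ x₄ x₅, d (l5 x₁ x₂ x₃ x₄ x₅) =
    - l3 x₁ x₂ (l3 x₃ x₄ x₅) + l3 (l3 x₁ x₂ x₃) x₄ x₅ + l3 x₃ (l3 x₁ x₂ x₄) x₅ +
      l3 x₃ x₄ (l3 x₁ x₂ x₅)
  cond₄ : ∀ α x₂ x₃ x₄ x₅, l5 (d α) x₂ x₃ x₄ x₅ =
    - l3m x₂ (l3 x₃ x₄ x₅) α + l3m x₄ x₅ (l3m x₂ x₃ α) - l3m x₃ x₅ (l3m x₂ x₄ α) +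
      l3m x₃ x₄ (l3m x₂ x₅ α)
  cond₅ : ∀ x₁ x₂ α x₄ x₅, l5 x₁ x₂ (d α) x₄ x₅ =
    - l3m x₁ x₂ (l3m x₄ x₅ α) + l3m x₄ x₅ (l3m x₁ x₂ α) + l3m (l3 x₁ x₂ x₄) x₅ α +
      l3m x₄ (l3 x₁ x₂ x₅) α
  cond₆ : ∀ x₁ x₂ x₃ x₄ x₅ x₆ x₇,
    l3m x₆ x₇ (l5 x₁ x₂ x₃ x₄ x₅) - l3m x₅ x₇ (l5 x₁ x₂ x₃ x₄ x₆) +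
      l3m x₁ x₂ (l5 x₃ x₄ x₅ x₆ x₇) + l3m x₅ x₆ (l5 x₁ x₂ x₃ x₄ x₇) +
      l5 x₁ x₂ (l3 x₃ x₄ x₅) x₆ x₇ + l5 x₁ x₂ x₅ (l3 x₃ x₄ x₆) x₇ +
      l5 x₁ x₂ x₅ x₆ (l3 x₃ x₄ x₇) =
    l3m x₃ x₄ (l5 x₁ x₂ x₅ x₆ x₇) + l5 (l3 x₁ x₂ x₃) x₄ x₅ x₆ x₇ +
      l5 x₃ (l3 x₁ x₂ x₄) x₅ x₆ x₇ + l5 x₃ x₄ (l3 x₁ x₂ x₅) x₆ x₇ +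
      l5 x₃ x₄ x₅ (l3 x₁ x₂ x₆) x₇ + l5 x₁ x₂ x₃ x₄ (l3 x₅ x₆ x₇) +
      l5 x₃ x₄ x₅ x₆ (l3 x₁ x₂ x₇)
  lin_T0 : IsLinearMap k T0
  lin_T1 : IsLinearMap k T1
  T2_tri : Trilinear k T2
  T2_alt : Alternating3 T2
  condA : ∀ α, T0 (d α) = d (T1 α)
  condB : ∀ x y z,
    T0 (derBracket k lam l3 T0 x y z) - l3 (T0 x) (T0 y) (T0 z) = d (T2 x y z)
  condC : ∀ x y α,
    T1 (l3m (T0 x) (T0 y) α + l3m x (T0 y) (T1 α) + l3m (T0 x) y (T1 α) +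
        lam • l3m (T0 x) y α + lam • l3m x (T0 y) α + lam • l3m x y (T1 α) +
        (lam * lam) • l3m x y α) -
      l3m (T0 x) (T0 y) (T1 α) = T2 x y (d α)
  condD : ∀ x₁ x₂ x₃ x₄ x₅,
    l5 (T0 x₁) (T0 x₂) (T0 x₃) (T0 x₄) (T0 x₅) +
      l3m (T0 x₄) (T0 x₅) (T2 x₁ x₂ x₃) - l3m (T0 x₃) (T0 x₅) (T2 x₁ x₂ x₄) +
      l3m (T0 x₃) (T0 x₄) (T2 x₁ x₂ x₅) +
      T2 (derBracket k lam l3 T0 x₁ x₂ x₃) x₄ x₅ +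
      T2 x₃ (derBracket k lam l3 T0 x₁ x₂ x₄) x₅ +
      T2 x₃ x₄ (derBracket k lam l3 T0 x₁ x₂ x₅) =
    l3m (T0 x₁) (T0 x₂) (T2 x₃ x₄ x₅) + T2 x₁ x₂ (derBracket k lam l3 T0 x₃ x₄ x₅) +
      T1 (l5 x₁ x₂ x₃ x₄ x₅)

end Defs

end RBPaper

open RBPaper

/-- the semidirect product of a Rota-Baxter 3-Lie algebra of weight
`lam` with a representation is a Rota-Baxter 3-Lie algebra of weight `lam`. -/
theorem semidirectProduct_isRBThreeLie
    {k : Type*} [Field k] [CharZero k]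
    {g M : Type*} [AddCommGroup g] [Module k g] [AddCommGroup M] [Module k M]
    (lam : k) (f : g → g → g → g) (T : g → g)
    (ρ : g → g → M → M) (TM : M → M)
    (halg : IsRBThreeLie k lam f T)
    (hrep : IsRBRep k lam f T ρ TM) :
    IsRBThreeLie k lam
      (fun a b c : g × M =>
        (f a.1 b.1 c.1, ρ a.1 b.1 c.2 + ρ b.1 c.1 a.2 + ρ c.1 a.1 b.2))
      (fun a : g × M => (T a.1, TM a.2)) := by
  obtain ⟨hlie, hlinT, hrb⟩ := halg
  obtain ⟨hρ, hTMlin, hrbM⟩ := hrep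
  have hρ1a : ∀ (x x' y : g) (m : M), ρ (x + x') y m = ρ x y m + ρ x' y m :=
    fun x x' y m => (hρ.lin₁ y m).map_add x x'
  have hρ1s : ∀ (c : k) (x y : g) (m : M), ρ (c • x) y m = c • ρ x y m :=
    fun c x y m => (hρ.lin₁ y m).map_smul c x
  have hρ2a : ∀ (x y y' : g) (m : M), ρ x (y + y') m = ρ x y m + ρ x y' m :=
    fun x y y' m => (hρ.lin₂ x m).map_add y y'
  have hρ2s : ∀ (c : k) (x y : g) (m : M), ρ x (c • y) m = c • ρ x y m :=
    fun c x y m => (hρ.lin₂ x m).map_smul c y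
  have hρ3a : ∀ (x y : g) (m m' : M), ρ x y (m + m') = ρ x y m + ρ x y m' :=
    fun x y m m' => (hρ.lin₃ x y).map_add m m'
  have hρ3s : ∀ (c : k) (x y : g) (m : M), ρ x y (c • m) = c • ρ x y m :=
    fun c x y m => (hρ.lin₃ x y).map_smul c m
  have hanti : ∀ (x y : g) (m : M), ρ y x m = - ρ x y m := by
    intro x y m
    have h0 := hρ.alt (x + y) m
    have h1 : ρ (x + y) (x + y) m = ρ x (x + y) m + ρ y (x + y) m := hρ1a x y (x + y) m
    have h2 : ρ x (x + y) m = ρ x x m + ρ x y m := hρ2a x x y m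
    have h3 : ρ y (x + y) m = ρ y x m + ρ y y m := hρ2a y x y m
    have h4 := hρ.alt x m
    have h5 := hρ.alt y m
    linear_combination (norm := module) h0 - h1 - h2 - h3 - h4 - h5
  have hneg : ∀ (x y : g) (m : M), ρ x y (-m) = - ρ x y m :=
    fun x y m => (hρ.lin₃ x y).map_neg m
  have hinner : ∀ (a b c d : g) (m : M), ρ a b (ρ d c m) = - ρ a b (ρ c d m) := by
    intro a b c d m
    rw [hanti c d m, hneg]
  have hstar : ∀ (a b c d : g) (m : M), ρ c d (ρ a b m) =
      ρ a c (ρ b d m) + ρ b d (ρ a c m) - ρ a b (ρ c d m) - ρ b c (ρ a d m) -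
        ρ a d (ρ b c m) := by
    intro a b c d m
    have h1 := hρ.rep₁ a b c d m
    have h2 := hρ.rep₂ d a b c m
    have h3 := hρ.rep₂ c a b d m
    have h4 := hanti d (f a b c) m
    have h5 := hinner b c a d m
    have h6 := hinner a c b d m
    have h7 := hinner a b c d m
    have h8 := hinner b d a c m
    have h9 := hinner a d b c m
    linear_combination (norm := module) -h1 - h4 + h2 - h3 + h5 - h6 + h7 - h8 + h9
  refine ⟨⟨⟨?_, ?_, ?_⟩, ⟨?_, ?_, ?_⟩, ?_⟩, ?_, ?_⟩
  · -- trilinear, first slot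
    rintro ⟨y, v⟩ ⟨z, w⟩
    constructor
    · rintro ⟨x, u⟩ ⟨x', u'⟩
      refine Prod.ext ?_ ?_ <;> simp only [Prod.mk_add_mk]
      · exact (hlie.tri.lin₁ y z).map_add x x'
      · linear_combination (norm := module) hρ1a x x' y w + hρ3a y z u u' + hρ2a z x x' v
    · rintro c ⟨x, u⟩
      refine Prod.ext ?_ ?_ <;> simp only [Prod.smul_mk]
      · exact (hlie.tri.lin₁ y z).map_smul c x
      · linear_combination (norm := module) hρ1s c x y w + hρ3s c y z u + hρ2s c z x v
  · -- trilinear, second slot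
    rintro ⟨x, u⟩ ⟨z, w⟩
    constructor
    · rintro ⟨y, v⟩ ⟨y', v'⟩
      refine Prod.ext ?_ ?_ <;> simp only [Prod.mk_add_mk]
      · exact (hlie.tri.lin₂ x z).map_add y y'
      · linear_combination (norm := module) hρ2a x y y' w + hρ1a y y' z u + hρ3a z x v v'
    · rintro c ⟨y, v⟩
      refine Prod.ext ?_ ?_ <;> simp only [Prod.smul_mk]
      · exact (hlie.tri.lin₂ x z).map_smul c y
      · linear_combination (norm := module) hρ2s c x y w + hρ1s c y z u + hρ3s c z x v
  · -- trilinear, third slot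
    rintro ⟨x, u⟩ ⟨y, v⟩
    constructor
    · rintro ⟨z, w⟩ ⟨z', w'⟩
      refine Prod.ext ?_ ?_ <;> simp only [Prod.mk_add_mk]
      · exact (hlie.tri.lin₃ x y).map_add z z'
      · linear_combination (norm := module) hρ3a x y w w' + hρ2a y z z' u + hρ1a z z' x v
    · rintro c ⟨z, w⟩
      refine Prod.ext ?_ ?_ <;> simp only [Prod.smul_mk]
      · exact (hlie.tri.lin₃ x y).map_smul c z
      · linear_combination (norm := module) hρ3s c x y w + hρ2s c y z u + hρ1s c z x v
  · -- alternating 12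
    rintro ⟨x, u⟩ ⟨y, v⟩
    refine Prod.ext ?_ ?_ <;> simp only [Prod.fst_zero, Prod.snd_zero]
    · exact hlie.alt.alt₁₂ x y
    · linear_combination (norm := module) hρ.alt x v + hanti x y u
  · -- alternating 23
    rintro ⟨x, u⟩ ⟨y, v⟩
    refine Prod.ext ?_ ?_ <;> simp only [Prod.fst_zero, Prod.snd_zero]
    · exact hlie.alt.alt₂₃ x y
    · linear_combination (norm := module) hρ.alt y u + hanti x y v
  · -- alternating 13
    rintro ⟨x, u⟩ ⟨y, v⟩
    refine Prod.ext ?_ ?_ <;> simp only [Prod.fst_zero, Prod.snd_zero]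
    · exact hlie.alt.alt₁₃ x y
    · linear_combination (norm := module) hρ.alt x v + hanti x y u
  · -- fundamental identity
    rintro ⟨x₁, u₁⟩ ⟨x₂, u₂⟩ ⟨x₃, u₃⟩ ⟨x₄, u₄⟩ ⟨x₅, u₅⟩
    refine Prod.ext ?_ ?_ <;> simp only [Prod.mk_add_mk]
    · exact hlie.fi x₁ x₂ x₃ x₄ x₅
    · simp only [hρ3a]
      linear_combination (norm := module)
        hρ.rep₂ x₂ x₃ x₄ x₅ u₁ + hanti x₁ (f x₃ x₄ x₅) u₂ - hρ.rep₂ x₁ x₃ x₄ x₅ u₂ -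
        hanti x₄ (f x₁ x₂ x₃) u₅ + hρ.rep₂ x₄ x₁ x₂ x₃ u₅ - hρ.rep₂ x₅ x₁ x₂ x₃ u₄ -
        hρ.rep₂ x₃ x₁ x₂ x₄ u₅ - hanti x₅ (f x₁ x₂ x₄) u₃ + hρ.rep₂ x₅ x₁ x₂ x₄ u₃ -
        hρ.rep₂ x₄ x₁ x₂ x₅ u₃ - hanti x₃ (f x₁ x₂ x₅) u₄ + hρ.rep₂ x₃ x₁ x₂ x₅ u₄ -
        hanti x₃ x₅ (ρ x₂ x₄ u₁) -
        hinner x₄ x₅ x₁ x₃ u₂ - hanti x₃ x₅ (ρ x₄ x₁ u₂) + hinner x₃ x₅ x₁ x₄ u₂ -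
        hinner x₃ x₄ x₁ x₅ u₂ -
        hstar x₁ x₂ x₄ x₅ u₃ + hinner x₂ x₄ x₁ x₅ u₃ - hinner x₁ x₄ x₂ x₅ u₃ +
        hinner x₁ x₂ x₄ x₅ u₃ - hinner x₂ x₅ x₁ x₄ u₃ + hinner x₁ x₅ x₂ x₄ u₃ -
        hanti x₃ x₅ (ρ x₁ x₂ u₄) + hstar x₁ x₂ x₃ x₅ u₄ - hinner x₂ x₃ x₁ x₅ u₄ +
        hinner x₁ x₃ x₂ x₅ u₄ + hinner x₂ x₅ x₁ x₃ u₄ - hinner x₁ x₅ x₂ x₃ u₄ -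
        hstar x₁ x₂ x₃ x₄ u₅ + hinner x₂ x₃ x₁ x₄ u₅ - hinner x₁ x₃ x₂ x₄ u₅ +
        hinner x₁ x₂ x₃ x₄ u₅ - hinner x₂ x₄ x₁ x₃ u₅ + hinner x₁ x₄ x₂ x₃ u₅
  · -- linearity of the operator
    constructor
    · rintro ⟨x, u⟩ ⟨x', u'⟩
      refine Prod.ext ?_ ?_ <;> simp only [Prod.mk_add_mk]
      · exact hlinT.map_add x x'
      · exact hTMlin.map_add u u'
    · rintro c ⟨x, u⟩
      refine Prod.ext ?_ ?_ <;> simp only [Prod.smul_mk]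
      · exact hlinT.map_smul c x
      · exact hTMlin.map_smul c u
  · -- Rota-Baxter identity
    rintro ⟨x₁, u₁⟩ ⟨x₂, u₂⟩ ⟨x₃, u₃⟩
    refine Prod.ext ?_ ?_ <;>
      simp only [Prod.mk_add_mk, Prod.smul_mk]
    · exact hrb x₁ x₂ x₃
    · rw [hrbM x₁ x₂ u₃, hrbM x₂ x₃ u₁, hrbM x₃ x₁ u₂]
      simp only [smul_add, hTMlin.map_add, hTMlin.map_smul]
      module
end

section
/- Let (g,[·,·,·],T) be a Rota-Baxter 3-Lie algebra of weight λ. Then T is a Rota-Baxter operator of weight λ on the 3-Lie algebra g_T = (g,[·,·,·]_T), i.e., [Tx,Ty,Tz]_T = T([Tx,Ty,z]_T + [Tx,y,Tz]_T + [x,Ty,Tz]_T + λ[Tx,y,z]_T + λ[x,Ty,z]_T + λ[x,y,Tz]_T + λ²[x,y,z]_T) for all x,y,z ∈ g. -/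
open RBPaper

/-- `T` is a Rota-Baxter operator of weight `lam` on the derived
3-Lie algebra `g_T = (g, [·,·,·]_T)`. -/
theorem derBracket_isRotaBaxterOp
    {k : Type*} [Field k] [CharZero k]
    {g : Type*} [AddCommGroup g] [Module k g]
    (lam : k) (f : g → g → g → g) (T : g → g)
    (halg : IsRBThreeLie k lam f T) :
    IsRotaBaxterOp k lam (derBracket k lam f T) T := by
  intro x y z
  have rb := halg.rb
  have hadd := halg.linT.map_add
  have hsmul := halg.linT.map_smul
  simp only [derBracket]
  rw [rb (T x) (T y) z, rb (T x) y (T z), rb x (T y) (T z),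
    rb (T x) y z, rb x (T y) z, rb x y (T z), rb x y z]
  simp only [hadd, hsmul]
end

section
/- Let (g,[·,·,·],T) be a Rota-Baxter 3-Lie algebra of weight λ and (M,ρ,T_M) a representation of it. Then ρ_T, defined by ρ_T(x,y)m := ρ(Tx,Ty)m − T_M(ρ(Tx,y)m + ρ(x,Ty)m + λρ(x,y)m), is a representation of the 3-Lie algebra g_T = (g,[·,·,·]_T) on M; that is, ρ_T(x,x) = 0 and ρ_T satisfies the two representation identities with respect to the bracket [·,·,·]_T. -/
open RBPaper

/-- `ρ_T(x,y)m := ρ(Tx,Ty)m − T_M(ρ(Tx,y)m + ρ(x,Ty)m + λρ(x,y)m)`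
defines a representation of the 3-Lie algebra `g_T = (g, [·,·,·]_T)` on `M`. -/
theorem rhoT_isRep
    {k : Type*} [Field k] [CharZero k]
    {g M : Type*} [AddCommGroup g] [Module k g] [AddCommGroup M] [Module k M]
    (lam : k) (f : g → g → g → g) (T : g → g)
    (ρ : g → g → M → M) (TM : M → M)
    (halg : IsRBThreeLie k lam f T)
    (hrep : IsRBRep k lam f T ρ TM) :
    IsRep k (derBracket k lam f T)
      (fun x y m =>
        ρ (T x) (T y) m - TM (ρ (T x) y m + ρ x (T y) m + lam • ρ x y m)) := by
  obtain ⟨lie, linT, hrbT⟩ := halg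
  obtain ⟨hR, linTM, hrbM⟩ := hrep
  have hTa : ∀ a b, T (a + b) = T a + T b := fun a b => linT.map_add a b
  have hTs : ∀ (c : k) (a : g), T (c • a) = c • T a := fun c a => linT.map_smul c a
  have hMa : ∀ a b, TM (a + b) = TM a + TM b := fun a b => linTM.map_add a b
  have hMs : ∀ (c : k) (a : M), TM (c • a) = c • TM a := fun c a => linTM.map_smul c a
  have hf1a : ∀ a b c d, f (a + b) c d = f a c d + f b c d :=
    fun a b c d => (lie.tri.lin₁ c d).map_add a b
  have hf1s : ∀ (t : k) a c d, f (t • a) c d = t • f a c d :=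
    fun t a c d => (lie.tri.lin₁ c d).map_smul t a
  have hf2a : ∀ a b c d, f a (b + c) d = f a b d + f a c d :=
    fun a b c d => (lie.tri.lin₂ a d).map_add b c
  have hf2s : ∀ (t : k) a c d, f a (t • c) d = t • f a c d :=
    fun t a c d => (lie.tri.lin₂ a d).map_smul t c
  have hf3a : ∀ a b c d, f a b (c + d) = f a b c + f a b d :=
    fun a b c d => (lie.tri.lin₃ a b).map_add c d
  have hf3s : ∀ (t : k) a b c, f a b (t • c) = t • f a b c :=
    fun t a b c => (lie.tri.lin₃ a b).map_smul t c
  have hr1a : ∀ a b c u, ρ (a + b) c u = ρ a c u + ρ b c u :=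
    fun a b c u => (hR.lin₁ c u).map_add a b
  have hr1s : ∀ (t : k) a c u, ρ (t • a) c u = t • ρ a c u :=
    fun t a c u => (hR.lin₁ c u).map_smul t a
  have hr2a : ∀ a b c u, ρ a (b + c) u = ρ a b u + ρ a c u :=
    fun a b c u => (hR.lin₂ a u).map_add b c
  have hr2s : ∀ (t : k) a c u, ρ a (t • c) u = t • ρ a c u :=
    fun t a c u => (hR.lin₂ a u).map_smul t c
  have hr3a : ∀ a b u v, ρ a b (u + v) = ρ a b u + ρ a b v :=
    fun a b u v => (hR.lin₃ a b).map_add u v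
  have hr3s : ∀ (t : k) a b u, ρ a b (t • u) = t • ρ a b u :=
    fun t a b u => (hR.lin₃ a b).map_smul t u
  have hTd : ∀ a b, T (a - b) = T a - T b := fun a b => linT.map_sub a b
  have hMd : ∀ a b, TM (a - b) = TM a - TM b := fun a b => linTM.map_sub a b
  have hf1d : ∀ a b c d, f (a - b) c d = f a c d - f b c d :=
    fun a b c d => (lie.tri.lin₁ c d).map_sub a b
  have hf2d : ∀ a b c d, f a (b - c) d = f a b d - f a c d :=
    fun a b c d => (lie.tri.lin₂ a d).map_sub b c
  have hf3d : ∀ a b c d, f a b (c - d) = f a b c - f a b d :=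
    fun a b c d => (lie.tri.lin₃ a b).map_sub c d
  have hr1d : ∀ a b c u, ρ (a - b) c u = ρ a c u - ρ b c u :=
    fun a b c u => (hR.lin₁ c u).map_sub a b
  have hr2d : ∀ a b c u, ρ a (b - c) u = ρ a b u - ρ a c u :=
    fun a b c u => (hR.lin₂ a u).map_sub b c
  have hr3d : ∀ a b u v, ρ a b (u - v) = ρ a b u - ρ a b v :=
    fun a b u v => (hR.lin₃ a b).map_sub u v
  have hrsw : ∀ a b u, ρ a b u = - ρ b a u := by
    intro a b u
    have h := hR.alt (a + b) u
    simp only [hr1a, hr2a] at h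
    linear_combination (norm := module) h - hR.alt a u - hR.alt b u
  refine { lin₁ := ?_, lin₂ := ?_, lin₃ := ?_, alt := ?_, rep₁ := ?_, rep₂ := ?_ }
  · intro y u
    refine ⟨fun a b => ?_, fun c a => ?_⟩ <;>
      simp only [hTa, hTs, hTd, hMa, hMs, hMd, hr1a, hr1s, hr1d, hr2a, hr2s, hr2d, hr3a, hr3s, hr3d] <;> module
  · intro x u
    refine ⟨fun a b => ?_, fun c a => ?_⟩ <;>
      simp only [hTa, hTs, hTd, hMa, hMs, hMd, hr1a, hr1s, hr1d, hr2a, hr2s, hr2d, hr3a, hr3s, hr3d] <;> module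
  · intro x y
    refine ⟨fun a b => ?_, fun c a => ?_⟩ <;>
      simp only [hTa, hTs, hTd, hMa, hMs, hMd, hr1a, hr1s, hr1d, hr2a, hr2s, hr2d, hr3a, hr3s, hr3d] <;> module
  · intro x u
    have h3 : ρ (T x) x u + ρ x (T x) u + lam • ρ x x u = 0 := by
      linear_combination (norm := module) hrsw (T x) x u + lam • hR.alt x u
    show ρ (T x) (T x) u - TM (ρ (T x) x u + ρ x (T x) u + lam • ρ x x u) = 0
    rw [h3, hR.alt (T x) u, linTM.map_zero, sub_zero]
  · intro x₁ x₂ x₃ x₄ w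
    simp only [derBracket, hTa, hTs, hTd, hMa, hMs, hMd, hf1a, hf1s, hf1d, hf2a, hf2s, hf2d, hf3a, hf3s, hf3d,
      hr1a, hr1s, hr1d, hr2a, hr2s, hr2d, hr3a, hr3s, hr3d]
    have h0 := congrArg (fun z => (TM z)) (hR.rep₁ (T x₁) x₂ (T x₃) (T x₄) w)
    try simp only [hTa, hTs, hTd, hMa, hMs, hMd, hf1a, hf1s, hf1d, hf2a, hf2s, hf2d, hf3a, hf3s, hf3d, hr1a, hr1s, hr1d, hr2a, hr2s, hr2d, hr3a, hr3s, hr3d] at h0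
    have h1 := congrArg (fun z => (TM z)) (hR.rep₁ x₁ (T x₂) (T x₃) (T x₄) w)
    try simp only [hTa, hTs, hTd, hMa, hMs, hMd, hf1a, hf1s, hf1d, hf2a, hf2s, hf2d, hf3a, hf3s, hf3d, hr1a, hr1s, hr1d, hr2a, hr2s, hr2d, hr3a, hr3s, hr3d] at h1
    have h2 := congrArg (fun z => (TM z)) (hR.rep₁ x₁ x₂ (T x₃) (T x₄) w)
    try simp only [hTa, hTs, hTd, hMa, hMs, hMd, hf1a, hf1s, hf1d, hf2a, hf2s, hf2d, hf3a, hf3s, hf3d, hr1a, hr1s, hr1d, hr2a, hr2s, hr2d, hr3a, hr3s, hr3d] at h2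
    have h3 := hrbM x₁ x₂ (ρ (T x₃) x₄ w)
    try simp only [hTa, hTs, hTd, hMa, hMs, hMd, hf1a, hf1s, hf1d, hf2a, hf2s, hf2d, hf3a, hf3s, hf3d, hr1a, hr1s, hr1d, hr2a, hr2s, hr2d, hr3a, hr3s, hr3d] at h3
    have h4 := hrbM x₁ x₂ (ρ x₃ (T x₄) w)
    try simp only [hTa, hTs, hTd, hMa, hMs, hMd, hf1a, hf1s, hf1d, hf2a, hf2s, hf2d, hf3a, hf3s, hf3d, hr1a, hr1s, hr1d, hr2a, hr2s, hr2d, hr3a, hr3s, hr3d] at h4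
    have h5 := hrbM x₁ x₂ (ρ x₃ x₄ w)
    try simp only [hTa, hTs, hTd, hMa, hMs, hMd, hf1a, hf1s, hf1d, hf2a, hf2s, hf2d, hf3a, hf3s, hf3d, hr1a, hr1s, hr1d, hr2a, hr2s, hr2d, hr3a, hr3s, hr3d] at h5
    have h6 := hR.rep₁ (T x₁) (T x₂) (T x₃) (T x₄) w
    try simp only [hTa, hTs, hTd, hMa, hMs, hMd, hf1a, hf1s, hf1d, hf2a, hf2s, hf2d, hf3a, hf3s, hf3d, hr1a, hr1s, hr1d, hr2a, hr2s, hr2d, hr3a, hr3s, hr3d] at h6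
    have h7 := hrbM x₃ x₄ (ρ (T x₁) x₂ w)
    try simp only [hTa, hTs, hTd, hMa, hMs, hMd, hf1a, hf1s, hf1d, hf2a, hf2s, hf2d, hf3a, hf3s, hf3d, hr1a, hr1s, hr1d, hr2a, hr2s, hr2d, hr3a, hr3s, hr3d] at h7
    have h8 := hrbM x₃ x₄ (ρ x₁ (T x₂) w)
    try simp only [hTa, hTs, hTd, hMa, hMs, hMd, hf1a, hf1s, hf1d, hf2a, hf2s, hf2d, hf3a, hf3s, hf3d, hr1a, hr1s, hr1d, hr2a, hr2s, hr2d, hr3a, hr3s, hr3d] at h8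
    have h9 := hrbM x₃ x₄ (ρ x₁ x₂ w)
    try simp only [hTa, hTs, hTd, hMa, hMs, hMd, hf1a, hf1s, hf1d, hf2a, hf2s, hf2d, hf3a, hf3s, hf3d, hr1a, hr1s, hr1d, hr2a, hr2s, hr2d, hr3a, hr3s, hr3d] at h9
    have h10 := congrArg (fun z => (TM z)) (hR.rep₁ (T x₁) (T x₂) (T x₃) x₄ w)
    try simp only [hTa, hTs, hTd, hMa, hMs, hMd, hf1a, hf1s, hf1d, hf2a, hf2s, hf2d, hf3a, hf3s, hf3d, hr1a, hr1s, hr1d, hr2a, hr2s, hr2d, hr3a, hr3s, hr3d] at h10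
    have h11 := congrArg (fun z => (TM z)) (hR.rep₁ (T x₁) (T x₂) x₃ (T x₄) w)
    try simp only [hTa, hTs, hTd, hMa, hMs, hMd, hf1a, hf1s, hf1d, hf2a, hf2s, hf2d, hf3a, hf3s, hf3d, hr1a, hr1s, hr1d, hr2a, hr2s, hr2d, hr3a, hr3s, hr3d] at h11
    have h12 := congrArg (fun z => (TM z)) (hR.rep₁ (T x₁) (T x₂) x₃ x₄ w)
    try simp only [hTa, hTs, hTd, hMa, hMs, hMd, hf1a, hf1s, hf1d, hf2a, hf2s, hf2d, hf3a, hf3s, hf3d, hr1a, hr1s, hr1d, hr2a, hr2s, hr2d, hr3a, hr3s, hr3d] at h12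
    have h13 := congrArg (fun z => (TM z)) (hR.rep₁ (T x₁) x₂ (T x₃) x₄ w)
    try simp only [hTa, hTs, hTd, hMa, hMs, hMd, hf1a, hf1s, hf1d, hf2a, hf2s, hf2d, hf3a, hf3s, hf3d, hr1a, hr1s, hr1d, hr2a, hr2s, hr2d, hr3a, hr3s, hr3d] at h13
    have h14 := congrArg (fun z => (TM z)) (hR.rep₁ (T x₁) x₂ x₃ (T x₄) w)
    try simp only [hTa, hTs, hTd, hMa, hMs, hMd, hf1a, hf1s, hf1d, hf2a, hf2s, hf2d, hf3a, hf3s, hf3d, hr1a, hr1s, hr1d, hr2a, hr2s, hr2d, hr3a, hr3s, hr3d] at h14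
    have h15 := congrArg (fun z => (TM z)) (hR.rep₁ (T x₁) x₂ x₃ x₄ w)
    try simp only [hTa, hTs, hTd, hMa, hMs, hMd, hf1a, hf1s, hf1d, hf2a, hf2s, hf2d, hf3a, hf3s, hf3d, hr1a, hr1s, hr1d, hr2a, hr2s, hr2d, hr3a, hr3s, hr3d] at h15
    have h16 := congrArg (fun z => (TM z)) (hR.rep₁ x₁ (T x₂) (T x₃) x₄ w)
    try simp only [hTa, hTs, hTd, hMa, hMs, hMd, hf1a, hf1s, hf1d, hf2a, hf2s, hf2d, hf3a, hf3s, hf3d, hr1a, hr1s, hr1d, hr2a, hr2s, hr2d, hr3a, hr3s, hr3d] at h16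
    have h17 := congrArg (fun z => (TM z)) (hR.rep₁ x₁ (T x₂) x₃ (T x₄) w)
    try simp only [hTa, hTs, hTd, hMa, hMs, hMd, hf1a, hf1s, hf1d, hf2a, hf2s, hf2d, hf3a, hf3s, hf3d, hr1a, hr1s, hr1d, hr2a, hr2s, hr2d, hr3a, hr3s, hr3d] at h17
    have h18 := congrArg (fun z => (TM z)) (hR.rep₁ x₁ (T x₂) x₃ x₄ w)
    try simp only [hTa, hTs, hTd, hMa, hMs, hMd, hf1a, hf1s, hf1d, hf2a, hf2s, hf2d, hf3a, hf3s, hf3d, hr1a, hr1s, hr1d, hr2a, hr2s, hr2d, hr3a, hr3s, hr3d] at h18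
    have h19 := congrArg (fun z => (TM z)) (hR.rep₁ x₁ x₂ (T x₃) x₄ w)
    try simp only [hTa, hTs, hTd, hMa, hMs, hMd, hf1a, hf1s, hf1d, hf2a, hf2s, hf2d, hf3a, hf3s, hf3d, hr1a, hr1s, hr1d, hr2a, hr2s, hr2d, hr3a, hr3s, hr3d] at h19
    have h20 := congrArg (fun z => (TM z)) (hR.rep₁ x₁ x₂ x₃ (T x₄) w)
    try simp only [hTa, hTs, hTd, hMa, hMs, hMd, hf1a, hf1s, hf1d, hf2a, hf2s, hf2d, hf3a, hf3s, hf3d, hr1a, hr1s, hr1d, hr2a, hr2s, hr2d, hr3a, hr3s, hr3d] at h20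
    have h21 := congrArg (fun z => (TM z)) (hR.rep₁ x₁ x₂ x₃ x₄ w)
    try simp only [hTa, hTs, hTd, hMa, hMs, hMd, hf1a, hf1s, hf1d, hf2a, hf2s, hf2d, hf3a, hf3s, hf3d, hr1a, hr1s, hr1d, hr2a, hr2s, hr2d, hr3a, hr3s, hr3d] at h21
    have h22 := congrArg (fun z => (ρ (T x₃) z w)) (hrbT x₁ x₂ x₄)
    try simp only [hTa, hTs, hTd, hMa, hMs, hMd, hf1a, hf1s, hf1d, hf2a, hf2s, hf2d, hf3a, hf3s, hf3d, hr1a, hr1s, hr1d, hr2a, hr2s, hr2d, hr3a, hr3s, hr3d] at h22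
    have h23 := congrArg (fun z => (ρ z (T x₄) w)) (hrbT x₁ x₂ x₃)
    try simp only [hTa, hTs, hTd, hMa, hMs, hMd, hf1a, hf1s, hf1d, hf2a, hf2s, hf2d, hf3a, hf3s, hf3d, hr1a, hr1s, hr1d, hr2a, hr2s, hr2d, hr3a, hr3s, hr3d] at h23
    have h24 := congrArg (fun z => (TM (ρ z x₄ w))) (hrbT x₁ x₂ x₃)
    try simp only [hTa, hTs, hTd, hMa, hMs, hMd, hf1a, hf1s, hf1d, hf2a, hf2s, hf2d, hf3a, hf3s, hf3d, hr1a, hr1s, hr1d, hr2a, hr2s, hr2d, hr3a, hr3s, hr3d] at h24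
    have h25 := congrArg (fun z => (TM (ρ x₃ z w))) (hrbT x₁ x₂ x₄)
    try simp only [hTa, hTs, hTd, hMa, hMs, hMd, hf1a, hf1s, hf1d, hf2a, hf2s, hf2d, hf3a, hf3s, hf3d, hr1a, hr1s, hr1d, hr2a, hr2s, hr2d, hr3a, hr3s, hr3d] at h25
    linear_combination (norm := module) (-1 : k) • h0 + (-1 : k) • h1 + (-(lam)) • h2 + (-1 : k) • h3 + (-1 : k) • h4 + (-(lam)) • h5 + (1 : k) • h6 + (1 : k) • h7 + (1 : k) • h8 + (lam) • h9 + (-1 : k) • h10 + (-1 : k) • h11 + (-(lam)) • h12 + (-(lam)) • h13 + (-(lam)) • h14 + (-(lam*lam)) • h15 + (-(lam)) • h16 + (-(lam)) • h17 + (-(lam*lam)) • h18 + (-(lam*lam)) • h19 + (-(lam*lam)) • h20 + (-(lam*lam*lam)) • h21 + (1 : k) • h22 + (1 : k) • h23 + (-1 : k) • h24 + (-1 : k) • h25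
  · intro x₁ x₂ x₃ x₄ w
    simp only [derBracket, hTa, hTs, hTd, hMa, hMs, hMd, hf1a, hf1s, hf1d, hf2a, hf2s, hf2d, hf3a, hf3s, hf3d,
      hr1a, hr1s, hr1d, hr2a, hr2s, hr2d, hr3a, hr3s, hr3d]
    have h0 := congrArg (fun z => (TM z)) (hR.rep₂ (T x₁) (T x₂) (T x₃) x₄ w)
    try simp only [hTa, hTs, hTd, hMa, hMs, hMd, hf1a, hf1s, hf1d, hf2a, hf2s, hf2d, hf3a, hf3s, hf3d, hr1a, hr1s, hr1d, hr2a, hr2s, hr2d, hr3a, hr3s, hr3d] at h0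
    have h1 := congrArg (fun z => (TM z)) (hR.rep₂ (T x₁) (T x₂) x₃ (T x₄) w)
    try simp only [hTa, hTs, hTd, hMa, hMs, hMd, hf1a, hf1s, hf1d, hf2a, hf2s, hf2d, hf3a, hf3s, hf3d, hr1a, hr1s, hr1d, hr2a, hr2s, hr2d, hr3a, hr3s, hr3d] at h1
    have h2 := congrArg (fun z => (TM z)) (hR.rep₂ (T x₁) (T x₂) x₃ x₄ w)
    try simp only [hTa, hTs, hTd, hMa, hMs, hMd, hf1a, hf1s, hf1d, hf2a, hf2s, hf2d, hf3a, hf3s, hf3d, hr1a, hr1s, hr1d, hr2a, hr2s, hr2d, hr3a, hr3s, hr3d] at h2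
    have h3 := congrArg (fun z => (TM z)) (hR.rep₂ (T x₁) x₂ (T x₃) (T x₄) w)
    try simp only [hTa, hTs, hTd, hMa, hMs, hMd, hf1a, hf1s, hf1d, hf2a, hf2s, hf2d, hf3a, hf3s, hf3d, hr1a, hr1s, hr1d, hr2a, hr2s, hr2d, hr3a, hr3s, hr3d] at h3
    have h4 := congrArg (fun z => (TM z)) (hR.rep₂ (T x₁) x₂ (T x₃) x₄ w)
    try simp only [hTa, hTs, hTd, hMa, hMs, hMd, hf1a, hf1s, hf1d, hf2a, hf2s, hf2d, hf3a, hf3s, hf3d, hr1a, hr1s, hr1d, hr2a, hr2s, hr2d, hr3a, hr3s, hr3d] at h4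
    have h5 := congrArg (fun z => (TM z)) (hR.rep₂ (T x₁) x₂ x₃ (T x₄) w)
    try simp only [hTa, hTs, hTd, hMa, hMs, hMd, hf1a, hf1s, hf1d, hf2a, hf2s, hf2d, hf3a, hf3s, hf3d, hr1a, hr1s, hr1d, hr2a, hr2s, hr2d, hr3a, hr3s, hr3d] at h5
    have h6 := congrArg (fun z => (TM z)) (hR.rep₂ (T x₁) x₂ x₃ x₄ w)
    try simp only [hTa, hTs, hTd, hMa, hMs, hMd, hf1a, hf1s, hf1d, hf2a, hf2s, hf2d, hf3a, hf3s, hf3d, hr1a, hr1s, hr1d, hr2a, hr2s, hr2d, hr3a, hr3s, hr3d] at h6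
    have h7 := congrArg (fun z => (TM z)) (hR.rep₂ x₁ (T x₂) (T x₃) x₄ w)
    try simp only [hTa, hTs, hTd, hMa, hMs, hMd, hf1a, hf1s, hf1d, hf2a, hf2s, hf2d, hf3a, hf3s, hf3d, hr1a, hr1s, hr1d, hr2a, hr2s, hr2d, hr3a, hr3s, hr3d] at h7
    have h8 := congrArg (fun z => (TM z)) (hR.rep₂ x₁ (T x₂) x₃ (T x₄) w)
    try simp only [hTa, hTs, hTd, hMa, hMs, hMd, hf1a, hf1s, hf1d, hf2a, hf2s, hf2d, hf3a, hf3s, hf3d, hr1a, hr1s, hr1d, hr2a, hr2s, hr2d, hr3a, hr3s, hr3d] at h8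
    have h9 := congrArg (fun z => (TM z)) (hR.rep₂ x₁ (T x₂) x₃ x₄ w)
    try simp only [hTa, hTs, hTd, hMa, hMs, hMd, hf1a, hf1s, hf1d, hf2a, hf2s, hf2d, hf3a, hf3s, hf3d, hr1a, hr1s, hr1d, hr2a, hr2s, hr2d, hr3a, hr3s, hr3d] at h9
    have h10 := congrArg (fun z => (TM z)) (hR.rep₂ x₁ x₂ (T x₃) (T x₄) w)
    try simp only [hTa, hTs, hTd, hMa, hMs, hMd, hf1a, hf1s, hf1d, hf2a, hf2s, hf2d, hf3a, hf3s, hf3d, hr1a, hr1s, hr1d, hr2a, hr2s, hr2d, hr3a, hr3s, hr3d] at h10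
    have h11 := congrArg (fun z => (TM z)) (hR.rep₂ x₁ x₂ (T x₃) x₄ w)
    try simp only [hTa, hTs, hTd, hMa, hMs, hMd, hf1a, hf1s, hf1d, hf2a, hf2s, hf2d, hf3a, hf3s, hf3d, hr1a, hr1s, hr1d, hr2a, hr2s, hr2d, hr3a, hr3s, hr3d] at h11
    have h12 := congrArg (fun z => (TM z)) (hR.rep₂ x₁ x₂ x₃ (T x₄) w)
    try simp only [hTa, hTs, hTd, hMa, hMs, hMd, hf1a, hf1s, hf1d, hf2a, hf2s, hf2d, hf3a, hf3s, hf3d, hr1a, hr1s, hr1d, hr2a, hr2s, hr2d, hr3a, hr3s, hr3d] at h12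
    have h13 := congrArg (fun z => (TM z)) (hR.rep₂ x₁ x₂ x₃ x₄ w)
    try simp only [hTa, hTs, hTd, hMa, hMs, hMd, hf1a, hf1s, hf1d, hf2a, hf2s, hf2d, hf3a, hf3s, hf3d, hr1a, hr1s, hr1d, hr2a, hr2s, hr2d, hr3a, hr3s, hr3d] at h13
    have h14 := hrbM x₂ x₃ (ρ (T x₁) x₄ w)
    try simp only [hTa, hTs, hTd, hMa, hMs, hMd, hf1a, hf1s, hf1d, hf2a, hf2s, hf2d, hf3a, hf3s, hf3d, hr1a, hr1s, hr1d, hr2a, hr2s, hr2d, hr3a, hr3s, hr3d] at h14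
    have h15 := hrbM x₂ x₃ (ρ x₁ (T x₄) w)
    try simp only [hTa, hTs, hTd, hMa, hMs, hMd, hf1a, hf1s, hf1d, hf2a, hf2s, hf2d, hf3a, hf3s, hf3d, hr1a, hr1s, hr1d, hr2a, hr2s, hr2d, hr3a, hr3s, hr3d] at h15
    have h16 := hrbM x₂ x₃ (ρ x₁ x₄ w)
    try simp only [hTa, hTs, hTd, hMa, hMs, hMd, hf1a, hf1s, hf1d, hf2a, hf2s, hf2d, hf3a, hf3s, hf3d, hr1a, hr1s, hr1d, hr2a, hr2s, hr2d, hr3a, hr3s, hr3d] at h16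
    have h17 := hrbM x₂ x₄ (ρ (T x₁) x₃ w)
    try simp only [hTa, hTs, hTd, hMa, hMs, hMd, hf1a, hf1s, hf1d, hf2a, hf2s, hf2d, hf3a, hf3s, hf3d, hr1a, hr1s, hr1d, hr2a, hr2s, hr2d, hr3a, hr3s, hr3d] at h17
    have h18 := hrbM x₂ x₄ (ρ x₁ (T x₃) w)
    try simp only [hTa, hTs, hTd, hMa, hMs, hMd, hf1a, hf1s, hf1d, hf2a, hf2s, hf2d, hf3a, hf3s, hf3d, hr1a, hr1s, hr1d, hr2a, hr2s, hr2d, hr3a, hr3s, hr3d] at h18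
    have h19 := hrbM x₂ x₄ (ρ x₁ x₃ w)
    try simp only [hTa, hTs, hTd, hMa, hMs, hMd, hf1a, hf1s, hf1d, hf2a, hf2s, hf2d, hf3a, hf3s, hf3d, hr1a, hr1s, hr1d, hr2a, hr2s, hr2d, hr3a, hr3s, hr3d] at h19
    have h20 := hrbM x₃ x₄ (ρ (T x₁) x₂ w)
    try simp only [hTa, hTs, hTd, hMa, hMs, hMd, hf1a, hf1s, hf1d, hf2a, hf2s, hf2d, hf3a, hf3s, hf3d, hr1a, hr1s, hr1d, hr2a, hr2s, hr2d, hr3a, hr3s, hr3d] at h20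
    have h21 := hrbM x₃ x₄ (ρ x₁ (T x₂) w)
    try simp only [hTa, hTs, hTd, hMa, hMs, hMd, hf1a, hf1s, hf1d, hf2a, hf2s, hf2d, hf3a, hf3s, hf3d, hr1a, hr1s, hr1d, hr2a, hr2s, hr2d, hr3a, hr3s, hr3d] at h21
    have h22 := hrbM x₃ x₄ (ρ x₁ x₂ w)
    try simp only [hTa, hTs, hTd, hMa, hMs, hMd, hf1a, hf1s, hf1d, hf2a, hf2s, hf2d, hf3a, hf3s, hf3d, hr1a, hr1s, hr1d, hr2a, hr2s, hr2d, hr3a, hr3s, hr3d] at h22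
    have h23 := hR.rep₂ (T x₁) (T x₂) (T x₃) (T x₄) w
    try simp only [hTa, hTs, hTd, hMa, hMs, hMd, hf1a, hf1s, hf1d, hf2a, hf2s, hf2d, hf3a, hf3s, hf3d, hr1a, hr1s, hr1d, hr2a, hr2s, hr2d, hr3a, hr3s, hr3d] at h23
    have h24 := congrArg (fun z => (ρ (T x₁) z w)) (hrbT x₂ x₃ x₄)
    try simp only [hTa, hTs, hTd, hMa, hMs, hMd, hf1a, hf1s, hf1d, hf2a, hf2s, hf2d, hf3a, hf3s, hf3d, hr1a, hr1s, hr1d, hr2a, hr2s, hr2d, hr3a, hr3s, hr3d] at h24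
    have h25 := congrArg (fun z => (TM z)) (hR.rep₂ x₁ (T x₂) (T x₃) (T x₄) w)
    try simp only [hTa, hTs, hTd, hMa, hMs, hMd, hf1a, hf1s, hf1d, hf2a, hf2s, hf2d, hf3a, hf3s, hf3d, hr1a, hr1s, hr1d, hr2a, hr2s, hr2d, hr3a, hr3s, hr3d] at h25
    have h26 := congrArg (fun z => (TM (ρ x₁ z w))) (hrbT x₂ x₃ x₄)
    try simp only [hTa, hTs, hTd, hMa, hMs, hMd, hf1a, hf1s, hf1d, hf2a, hf2s, hf2d, hf3a, hf3s, hf3d, hr1a, hr1s, hr1d, hr2a, hr2s, hr2d, hr3a, hr3s, hr3d] at h26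
    linear_combination (norm := module) (-1 : k) • h0 + (-1 : k) • h1 + (-(lam)) • h2 + (-1 : k) • h3 + (-(lam)) • h4 + (-(lam)) • h5 + (-(lam*lam)) • h6 + (-(lam)) • h7 + (-(lam)) • h8 + (-(lam*lam)) • h9 + (-(lam)) • h10 + (-(lam*lam)) • h11 + (-(lam*lam)) • h12 + (-(lam*lam*lam)) • h13 + (1 : k) • h14 + (1 : k) • h15 + (lam) • h16 + (-1 : k) • h17 + (-1 : k) • h18 + (-(lam)) • h19 + (1 : k) • h20 + (1 : k) • h21 + (lam) • h22 + (1 : k) • h23 + (-1 : k) • h24 + (-1 : k) • h25 + (1 : k) • h26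
end

section
/- Let (g,[·,·,·],T) be a Rota-Baxter 3-Lie algebra of weight λ and (M,ρ,T_M) a representation of it. Then (M, ρ_T, T_M), where ρ_T(x,y)m := ρ(Tx,Ty)m − T_M(ρ(Tx,y)m + ρ(x,Ty)m + λρ(x,y)m), is a representation of the Rota-Baxter 3-Lie algebra (g_T, [·,·,·]_T, T) of weight λ; in particular ρ_T(Tx,Ty)(T_M m) = T_M(ρ_T(Tx,Ty)m + ρ_T(Tx,y)(T_M m) + ρ_T(x,Ty)(T_M m) + λρ_T(Tx,y)m + λρ_T(x,Ty)m + λρ_T(x,y)(T_M m) + λ²ρ_T(x,y)m) for all x,y ∈ g, m ∈ M. -/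
open RBPaper

/-- `(M, ρ_T, T_M)` is a representation of the Rota-Baxter 3-Lie
algebra `(g_T, [·,·,·]_T, T)` of weight `lam`. -/
theorem rhoT_isRBRep
    {k : Type*} [Field k] [CharZero k]
    {g M : Type*} [AddCommGroup g] [Module k g] [AddCommGroup M] [Module k M]
    (lam : k) (f : g → g → g → g) (T : g → g)
    (ρ : g → g → M → M) (TM : M → M)
    (halg : IsRBThreeLie k lam f T)
    (hrep : IsRBRep k lam f T ρ TM) :
    IsRBRep k lam (derBracket k lam f T) T
      (fun x y m =>
        ρ (T x) (T y) m - TM (ρ (T x) y m + ρ x (T y) m + lam • ρ x y m))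
      TM := by
  
  obtain ⟨hlie, hT, hgrb⟩ := halg
  obtain ⟨hr, hTM, hrb⟩ := hrep
  have hTa : ∀ a b : g, T (a + b) = T a + T b := hT.map_add
  have hTs : ∀ (c : k) (a : g), T (c • a) = c • T a := fun c a => hT.map_smul c a
  have r1a : ∀ (a b y : g) (m : M), ρ (a + b) y m = ρ a y m + ρ b y m :=
    fun a b y m => (hr.lin₁ y m).map_add a b
  have r1s : ∀ (c : k) (a y : g) (m : M), ρ (c • a) y m = c • ρ a y m :=
    fun c a y m => (hr.lin₁ y m).map_smul c a
  have r2a : ∀ (x a b : g) (m : M), ρ x (a + b) m = ρ x a m + ρ x b m :=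
    fun x a b m => (hr.lin₂ x m).map_add a b
  have r2s : ∀ (x : g) (c : k) (a : g) (m : M), ρ x (c • a) m = c • ρ x a m :=
    fun x c a m => (hr.lin₂ x m).map_smul c a
  have r3a : ∀ (x y : g) (a b : M), ρ x y (a + b) = ρ x y a + ρ x y b :=
    fun x y a b => (hr.lin₃ x y).map_add a b
  have r3s : ∀ (x y : g) (c : k) (a : M), ρ x y (c • a) = c • ρ x y a :=
    fun x y c a => (hr.lin₃ x y).map_smul c a
  have r3sub : ∀ (x y : g) (a b : M), ρ x y (a - b) = ρ x y a - ρ x y b :=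
    fun x y a b => (hr.lin₃ x y).mk' _ |>.map_sub a b
  have TMa : ∀ a b : M, TM (a + b) = TM a + TM b := hTM.map_add
  have TMs : ∀ (c : k) (a : M), TM (c • a) = c • TM a := fun c a => hTM.map_smul c a
  have TMsub : ∀ a b : M, TM (a - b) = TM a - TM b := fun a b => hTM.mk' _ |>.map_sub a b
  have TM0 : TM 0 = 0 := (hTM.mk' _).map_zero
  refine ⟨⟨?_, ?_, ?_, ?_, ?_, ?_⟩, hTM, ?_⟩
  · -- lin₁
    intro y m
    refine ⟨fun a b => ?_, fun c a => ?_⟩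
    · simp only [hTa, r1a, TMa, smul_add]
      module
    · simp only [hTs, r1s, TMa, TMs, smul_add]
      module
  · -- lin₂
    intro x m
    refine ⟨fun a b => ?_, fun c a => ?_⟩
    · simp only [hTa, r2a, TMa, smul_add]
      module
    · simp only [hTs, r2s, TMa, TMs, smul_add]
      module
  · -- lin₃
    intro x y
    refine ⟨fun a b => ?_, fun c a => ?_⟩
    · simp only [r3a, TMa, smul_add]
      module
    · simp only [r3s, TMa, TMs, smul_add]
      module
  · -- alt
    intro x m
    have h := hr.alt (T x + x) m
    simp only [r1a, r2a] at h
    have h0 : ρ (T x) x m + ρ x (T x) m + lam • ρ x x m = 0 := by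
      linear_combination (norm := module) h - hr.alt (T x) m - hr.alt x m + lam • hr.alt x m
    rw [h0, hr.alt (T x) m, TM0, sub_zero]
  · -- rep₁
    intro x1 x2 x3 x4 m
    have H0 := hr.rep₁ (T x1) (T x2) (T x3) (T x4) m
    have hb1 := hrb x1 x2 (ρ (T x3) x4 m)
    have hb2 := hrb x1 x2 (ρ x3 (T x4) m)
    have hb3 := hrb x1 x2 (ρ x3 x4 m)
    have hc1 := hrb x3 x4 (ρ (T x1) x2 m)
    have hc2 := hrb x3 x4 (ρ x1 (T x2) m)
    have hc3 := hrb x3 x4 (ρ x1 x2 m)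
    have D1 := congrArg TM (hr.rep₁ (T x1) (T x2) (T x3) x4 m)
    have D2 := congrArg TM (hr.rep₁ (T x1) (T x2) x3 (T x4) m)
    have D3 := congrArg TM (hr.rep₁ (T x1) (T x2) x3 x4 m)
    have D4 := congrArg TM (hr.rep₁ (T x1) x2 (T x3) (T x4) m)
    have D5 := congrArg TM (hr.rep₁ (T x1) x2 (T x3) x4 m)
    have D6 := congrArg TM (hr.rep₁ (T x1) x2 x3 (T x4) m)
    have D7 := congrArg TM (hr.rep₁ (T x1) x2 x3 x4 m)
    have D8 := congrArg TM (hr.rep₁ x1 (T x2) (T x3) (T x4) m)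
    have D9 := congrArg TM (hr.rep₁ x1 (T x2) (T x3) x4 m)
    have D10 := congrArg TM (hr.rep₁ x1 (T x2) x3 (T x4) m)
    have D11 := congrArg TM (hr.rep₁ x1 (T x2) x3 x4 m)
    have D12 := congrArg TM (hr.rep₁ x1 x2 (T x3) (T x4) m)
    have D13 := congrArg TM (hr.rep₁ x1 x2 (T x3) x4 m)
    have D14 := congrArg TM (hr.rep₁ x1 x2 x3 (T x4) m)
    have D15 := congrArg TM (hr.rep₁ x1 x2 x3 x4 m)
    simp only [derBracket]
    rw [← hgrb x1 x2 x3, ← hgrb x1 x2 x4]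
    simp only [hTa, hTs, r1a, r1s, r2a, r2s, r3a, r3s, r3sub, TMa, TMs, TMsub,
      smul_add, smul_sub] at hb1 hb2 hb3 hc1 hc2 hc3 D1 D2 D3 D4 D5 D6 D7 D8 D9 D10 D11 D12 D13 D14 D15 ⊢
    linear_combination (norm := module) H0 - hb1 - hb2 - lam • hb3 + hc1 + hc2 + lam • hc3
      - D1 - D2 - lam • D3 - D4 - lam • D5 - lam • D6 - (lam*lam) • D7 - D8 - lam • D9
      - lam • D10 - (lam*lam) • D11 - lam • D12 - (lam*lam) • D13 - (lam*lam) • D14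
      - (lam*lam*lam) • D15
  · -- rep₂
    intro x1 x2 x3 x4 m
    have H0 := hr.rep₂ (T x1) (T x2) (T x3) (T x4) m
    have hb1 := hrb x3 x4 (ρ (T x1) x2 m)
    have hb2 := hrb x3 x4 (ρ x1 (T x2) m)
    have hb3 := hrb x3 x4 (ρ x1 x2 m)
    have hc1 := hrb x2 x4 (ρ (T x1) x3 m)
    have hc2 := hrb x2 x4 (ρ x1 (T x3) m)
    have hc3 := hrb x2 x4 (ρ x1 x3 m)
    have hd1 := hrb x2 x3 (ρ (T x1) x4 m)
    have hd2 := hrb x2 x3 (ρ x1 (T x4) m)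
    have hd3 := hrb x2 x3 (ρ x1 x4 m)
    have D1 := congrArg TM (hr.rep₂ (T x1) (T x2) (T x3) x4 m)
    have D2 := congrArg TM (hr.rep₂ (T x1) (T x2) x3 (T x4) m)
    have D3 := congrArg TM (hr.rep₂ (T x1) (T x2) x3 x4 m)
    have D4 := congrArg TM (hr.rep₂ (T x1) x2 (T x3) (T x4) m)
    have D5 := congrArg TM (hr.rep₂ (T x1) x2 (T x3) x4 m)
    have D6 := congrArg TM (hr.rep₂ (T x1) x2 x3 (T x4) m)
    have D7 := congrArg TM (hr.rep₂ (T x1) x2 x3 x4 m)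
    have D8 := congrArg TM (hr.rep₂ x1 (T x2) (T x3) (T x4) m)
    have D9 := congrArg TM (hr.rep₂ x1 (T x2) (T x3) x4 m)
    have D10 := congrArg TM (hr.rep₂ x1 (T x2) x3 (T x4) m)
    have D11 := congrArg TM (hr.rep₂ x1 (T x2) x3 x4 m)
    have D12 := congrArg TM (hr.rep₂ x1 x2 (T x3) (T x4) m)
    have D13 := congrArg TM (hr.rep₂ x1 x2 (T x3) x4 m)
    have D14 := congrArg TM (hr.rep₂ x1 x2 x3 (T x4) m)
    have D15 := congrArg TM (hr.rep₂ x1 x2 x3 x4 m)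
    simp only [derBracket]
    rw [← hgrb x2 x3 x4]
    simp only [hTa, hTs, r1a, r1s, r2a, r2s, r3a, r3s, r3sub, TMa, TMs, TMsub,
      smul_add, smul_sub] at hb1 hb2 hb3 hc1 hc2 hc3 hd1 hd2 hd3 D1 D2 D3 D4 D5 D6 D7 D8 D9 D10 D11 D12 D13 D14 D15 ⊢
    linear_combination (norm := module) H0
      + hb1 + hb2 + lam • hb3 - hc1 - hc2 - lam • hc3 + hd1 + hd2 + lam • hd3
      - D1 - D2 - lam • D3 - D4 - lam • D5 - lam • D6 - (lam*lam) • D7 - D8 - lam • D9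
      - lam • D10 - (lam*lam) • D11 - lam • D12 - (lam*lam) • D13 - (lam*lam) • D14
      - (lam*lam*lam) • D15
  · -- rb
    intro x y m
    have H := hrb (T x) (T y) m
    have B1 := congrArg TM (hrb (T x) y m)
    have B2 := congrArg TM (hrb x (T y) m)
    have B3 := congrArg TM (hrb x y m)
    simp only [r3a, r3s, r3sub, TMa, TMs, TMsub, smul_add, smul_sub] at H B1 B2 B3 ⊢
    linear_combination (norm := module) H - B1 - B2 - lam • B3
end

section
/- Let (g,[·,·,·],T) be a Rota-Baxter 3-Lie algebra of weight λ and let (μ_i, T_i)_{i≥0} be a 1-parameter formal deformation of it, i.e., each μ_i : g×g×g → g is an alternating trilinear map and each T_i : g → g is linear, with μ_0 = [·,·,·] and T_0 = T, and for every n ≥ 0 and all x1,...,x5 ∈ g: (i) Σ_{i+j=n} μ_i(x1,x2,μ_j(x3,x4,x5)) = Σ_{i+j=n} ( μ_i(μ_j(x1,x2,x3),x4,x5) + μ_i(x3,μ_j(x1,x2,x4),x5) + μ_i(x3,x4,μ_j(x1,x2,x5)) ), and (ii) Σ_{i+j+k+l=n} μ_i(T_j x1, T_k x2, T_l x3) =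 Σ_{i+j+k+l=n} T_i( μ_j(T_k x1, T_l x2, x3) + μ_j(T_k x1, x2, T_l x3) + μ_j(x1, T_k x2, T_l x3) ) + λ Σ_{i+j+k=n} T_i( μ_j(T_k x1, x2, x3) + μ_j(x1, T_k x2, x3) + μ_j(x1, x2, T_k x3) ) + λ² Σ_{i+j=n} T_i(μ_j(x1,x2,x3)). Then the infinitesimal (μ_1, T_1) is a 2-cocycle of the Rota-Baxter 3-Lie algebra (g,T) with coefficients in the adjoint representation. -/
/-!
Basic notions for Rota-Baxter 3-Lie algebras of arbitrary weight,
following Guo–Qin–Wang–Zhou.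
-/

namespace RBPaper

section Defs

variable (k : Type*) [Field k]
variable {g M E g₀ g₁ : Type*}
variable [AddCommGroup g] [Module k g] [AddCommGroup M] [Module k M]
variable [AddCommGroup E] [Module k E]
variable [AddCommGroup g₀] [Module k g₀] [AddCommGroup g₁] [Module k g₁]

lemma cyc_of_alt {k : Type*} [Field k] {g M : Type*} [AddCommGroup g] [Module k g]
    [AddCommGroup M] [Module k M]
    (f : g → g → g → M) (tri : Trilinear k f) (alt : Alternating3 f) :
    ∀ a b c, f a b c = f b c a := by
  have swap12 : ∀ a b c, f b a c = - f a b c := by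
    intro a b c
    have h0 : f a a c + f a b c + (f b a c + f b b c) = 0 := by
      have e1 := (tri.lin₁ (a + b) c).map_add a b
      have e2 := (tri.lin₂ a c).map_add a b
      have e3 := (tri.lin₂ b c).map_add a b
      rw [← e2, ← e3, ← e1]
      exact alt.alt₁₂ (a + b) c
    rw [alt.alt₁₂, alt.alt₁₂] at h0
    linear_combination (norm := module) h0
  have swap23 : ∀ a b c, f a c b = - f a b c := by
    intro a b c
    have h0 : f a b b + f a b c + (f a c b + f a c c) = 0 := by
      have e2 := (tri.lin₃ a b).map_add b c
      have e3 := (tri.lin₃ a c).map_add b c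
      have e4 := (tri.lin₂ a (b + c)).map_add b c
      rw [← e2, ← e3, ← e4]
      exact alt.alt₂₃ a (b + c)
    rw [alt.alt₂₃ a b, alt.alt₂₃] at h0
    linear_combination (norm := module) h0
  intro a b c
  rw [swap23 b a c, swap12 a b c, neg_neg]

end Defs

end RBPaper

open RBPaper

/-- the infinitesimal `(μ 1, 𝒯 1)` of a 1-parameter formal
deformation of a Rota-Baxter 3-Lie algebra of weight `lam` is a 2-cocycle with
coefficients in the adjoint representation. -/
theorem deformation_infinitesimal_is_twoCocycle
    {k : Type*} [Field k] [CharZero k]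
    {g : Type*} [AddCommGroup g] [Module k g]
    (lam : k) (f : g → g → g → g) (T : g → g)
    (halg : IsRBThreeLie k lam f T)
    (μ : ℕ → g → g → g → g) (𝒯 : ℕ → g → g)
    (hdef : IsDeformation k lam f T μ 𝒯) :
    IsTwoCocycle k lam f T (fun x y z => f x y z) T (μ 1) (𝒯 1) := by
  have cyc := cyc_of_alt (k := k) f halg.lie.tri halg.lie.alt
  refine ⟨hdef.tri 1, hdef.alt 1, hdef.lin 1, ?_, ?_⟩
  · intro x1 x2 x3 x4 x5
    have h := hdef.fi 1 x1 x2 x3 x4 x5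
    simp only [Finset.sum_range_succ, Finset.sum_range_zero, hdef.μ₀, Nat.sub_self,
      Nat.sub_zero, zero_add] at h
    linear_combination (norm := module) h + cyc (μ 1 x1 x2 x3) x4 x5 +
      cyc x3 (μ 1 x1 x2 x4) x5 + cyc (μ 1 x1 x2 x4) x5 x3
  · intro x y z
    have hT := halg.linT
    have h1 := hdef.lin 1
    have h := hdef.rb 1 x y z
    simp only [Finset.sum_range_succ, Finset.sum_range_zero, hdef.μ₀, hdef.𝒯₀, Nat.sub_self,
      Nat.sub_zero, zero_add, hT.map_add, h1.map_add, smul_add] at h ⊢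
    linear_combination (norm := module) h +
      cyc (T z) (T x) (𝒯 1 y) - cyc (𝒯 1 x) (T y) (T z) +
      congrArg T (cyc (𝒯 1 x) (T y) z) - congrArg T (cyc z (T x) (𝒯 1 y)) +
      congrArg T (cyc (𝒯 1 x) y (T z)) - congrArg T (cyc (T z) x (𝒯 1 y)) +
      lam • congrArg T (cyc (𝒯 1 x) y z) - lam • congrArg T (cyc z x (𝒯 1 y))
end

section
/- Let (g,[·,·,·],T) be a Rota-Baxter 3-Lie algebra of weight λ and let (μ_i, T_i)_{i≥0} and (μ'_i, T'_i)_{i≥0} be two 1-parameter formal deformations of it (each μ_i, μ'_i alternating trilinear, T_i, T'_i linear, μ_0 = μ'_0 = [·,·,·], T_0 = T'_0 = T, satisfying the deformation equations of Rota-Baxter 3-Lie algebras coefficientwise for every n ≥ 0). Suppose they are equivalent via linear maps (ψ_i)_{i≥0}, ψ_i : g → g with ψ_0 = id_g, i.e., for every n ≥ 0 and all x,y,z ∈ g: Σ_{a+b=n} ψ_a(μ'_b(x,y,z)) = Σ_{a+b+c+d=n} μ_a(ψ_b x, ψ_c y, ψ_d z) and Σ_{a+b=n} ψ_a(T'_b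 x) = Σ_{a+b=n} T_a(ψ_b x). Then the infinitesimals (μ_1, T_1) and (μ'_1, T'_1) are cohomologous 2-cocycles with coefficients in the adjoint representation; explicitly, μ'_1(x,y,z) = μ_1(x,y,z) + [ψ_1 x, y, z] + [x, ψ_1 y, z] + [x, y, ψ_1 z] − ψ_1([x,y,z]) and T'_1 = T_1 + T∘ψ_1 − ψ_1∘T. -/
open RBPaper

/-- the infinitesimals of two equivalent 1-parameter formal
deformations of a Rota-Baxter 3-Lie algebra of weight `lam` are cohomologous
2-cocycles in the adjoint representation; explicitly,
`μ'₁ = μ₁ + δ¹(ψ₁)` and `𝒯'₁ = 𝒯₁ + T∘ψ₁ − ψ₁∘T`. -/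
theorem equivalent_deformations_infinitesimals_cohomologous
    {k : Type*} [Field k] [CharZero k]
    {g : Type*} [AddCommGroup g] [Module k g]
    (lam : k) (f : g → g → g → g) (T : g → g)
    (halg : IsRBThreeLie k lam f T)
    (μ μ' : ℕ → g → g → g → g) (𝒯 𝒯' : ℕ → g → g)
    (hdef : IsDeformation k lam f T μ 𝒯)
    (hdef' : IsDeformation k lam f T μ' 𝒯')
    (ψ : ℕ → g → g) (hψlin : ∀ i, IsLinearMap k (ψ i)) (hψ0 : ψ 0 = id)
    (hμ : ∀ n x y z,
      ∑ a ∈ Finset.range (n + 1), ψ a (μ' (n - a) x y z) =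
        ∑ a ∈ Finset.range (n + 1), ∑ b ∈ Finset.range (n - a + 1),
          ∑ c ∈ Finset.range (n - a - b + 1),
          μ a (ψ b x) (ψ c y) (ψ (n - a - b - c) z))
    (hT : ∀ n x,
      ∑ a ∈ Finset.range (n + 1), ψ a (𝒯' (n - a) x) =
        ∑ a ∈ Finset.range (n + 1), 𝒯 a (ψ (n - a) x)) :
    (∀ x y z, μ' 1 x y z =
        μ 1 x y z + f (ψ 1 x) y z + f x (ψ 1 y) z + f x y (ψ 1 z) -
          ψ 1 (f x y z)) ∧
      (∀ x, 𝒯' 1 x = 𝒯 1 x + T (ψ 1 x) - ψ 1 (T x)) := by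
  constructor
  · intro x y z
    have h := hμ 1 x y z
    simp [Finset.sum_range_succ, hψ0, hdef.μ₀, hdef'.μ₀] at h
    rw [eq_sub_iff_add_eq, h]; abel
  · intro x
    have h := hT 1 x
    simp [Finset.sum_range_succ, hψ0, hdef.𝒯₀, hdef'.𝒯₀] at h
    rw [eq_sub_iff_add_eq, h]; abel
end

section
/- Let 0 → (M,T_M) →^i (ĝ,[·,·,·]_ĝ,T̂) →^p (g,[·,·,·]_g,T) → 0 be an abelian extension of Rota-Baxter 3-Lie algebras of weight λ and let s : g → ĝ be a section of p. Then for all x,y ∈ g and m ∈ M the element [s(x), s(y), i(m)]_ĝ lies in the image of i, and the bilinear map ρ : g×g → End(M) defined by i(ρ(x,y)m) = [s(x), s(y), i(m)]_ĝ makes (M, ρ, T_M) a representation of the Rota-Baxter 3-Lie algebra (g,[·,·,·]_g,T) of weight λ. -/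
/-!
Basic notions for Rota-Baxter 3-Lie algebras of arbitrary weight,
following Guo–Qin–Wang–Zhou.
-/

namespace RBPaper

section Helpers

variable {k : Type*} [Field k] {g M : Type*} [AddCommGroup g] [Module k g]
  [AddCommGroup M] [Module k M]

theorem tri_skew12 {f : g → g → g → M} (tri : Trilinear k f)
    (alt : Alternating3 f) (x y z : g) : f y x z = - f x y z := by
  have h := alt.alt₁₂ (x + y) z
  have e1 : f (x + y) (x + y) z = f x (x + y) z + f y (x + y) z :=
    (tri.lin₁ (x + y) z).map_add x y
  have e2 : f x (x + y) z = f x x z + f x y z := (tri.lin₂ x z).map_add x y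
  have e3 : f y (x + y) z = f y x z + f y y z := (tri.lin₂ y z).map_add x y
  rw [e1, e2, e3, alt.alt₁₂, alt.alt₁₂, zero_add, add_zero, add_comm] at h
  exact eq_neg_of_add_eq_zero_left h

theorem tri_skew23 {f : g → g → g → M} (tri : Trilinear k f)
    (alt : Alternating3 f) (x y z : g) : f x z y = - f x y z := by
  have h := alt.alt₂₃ x (y + z)
  have e1 : f x (y + z) (y + z) = f x (y + z) y + f x (y + z) z :=
    (tri.lin₃ x (y + z)).map_add y z
  have e2 : f x (y + z) y = f x y y + f x z y := (tri.lin₂ x y).map_add y z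
  have e3 : f x (y + z) z = f x y z + f x z z := (tri.lin₂ x z).map_add y z
  rw [e1, e2, e3, alt.alt₂₃, alt.alt₂₃, zero_add, add_zero] at h
  exact eq_neg_of_add_eq_zero_left h

theorem tri_cyc {f : g → g → g → M} (tri : Trilinear k f)
    (alt : Alternating3 f) (x y z : g) : f z x y = f x y z := by
  rw [tri_skew12 tri alt x z y, tri_skew23 tri alt x y z, neg_neg]

end Helpers

end RBPaper

open RBPaper

/-- given an abelian extension of Rota-Baxter 3-Lie algebras of
weight `lam` and a section `s` of `p`, the element `[s x, s y, i m]` always lies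
in the image of `i`, and the induced map `ρ` with `i (ρ x y m) = [s x, s y, i m]`
makes `(M, ρ, TM)` a representation of `(g, f, T)`. -/
theorem abelianExt_induced_isRBRep
    {k : Type*} [Field k] [CharZero k]
    {g M E : Type*} [AddCommGroup g] [Module k g] [AddCommGroup M] [Module k M]
    [AddCommGroup E] [Module k E]
    (lam : k) (f : g → g → g → g) (T : g → g) (TM : M → M)
    (fE : E → E → E → E) (TE : E → E) (i : M → E) (p : E → g)
    (hext : IsAbelianExt k lam f T TM fE TE i p)
    (s : g → E) (hs_lin : IsLinearMap k s) (hsec : ∀ x, p (s x) = x) :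
    (∀ x y m, fE (s x) (s y) (i m) ∈ Set.range i) ∧
      ∀ ρ : g → g → M → M,
        (∀ x y m, i (ρ x y m) = fE (s x) (s y) (i m)) →
          IsRBRep k lam f T ρ TM := by
  obtain ⟨hbase, htot, hlinTM, hi, hp, hirb, hpb, hprb, hinj, hsurj, hexact, hab⟩ := hext
  have triE := htot.lie.tri
  have altE := htot.lie.alt
  have fiE := htot.lie.fi
  have sw23 : ∀ a b c : E, fE a c b = - fE a b c := tri_skew23 triE altE
  have cyc : ∀ a b c : E, fE c a b = fE a b c := tri_cyc triE altE
  have pz : ∀ m, p (i m) = 0 := fun m => (hexact (i m)).2 ⟨m, rfl⟩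
  have hrange : ∀ x y m, fE (s x) (s y) (i m) ∈ Set.range i := by
    intro x y m
    rw [← hexact, hpb, hsec, hsec, pz]
    exact (hbase.lie.tri.lin₃ x y).map_zero
  -- vanishing of brackets with two entries from M
  have z1 : ∀ (a : E) (n q : M), fE a (i n) (i q) = 0 := hab
  have z2 : ∀ (a : E) (n q : M), fE (i n) a (i q) = 0 := by
    intro a n q
    rw [tri_skew12 triE altE a (i n) (i q), z1, neg_zero]
  -- the congruence lemma
  have hcg : ∀ (a a' b b' : E) (m : M), p a = p a' → p b = p b' →
      fE a b (i m) = fE a' b' (i m) := by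
    intro a a' b b' m ha hb
    obtain ⟨n, hn⟩ := (hexact (a' - a)).1 (by rw [hp.map_sub, ← ha, sub_self])
    obtain ⟨q, hq⟩ := (hexact (b' - b)).1 (by rw [hp.map_sub, ← hb, sub_self])
    have ha' : a' = a + i n := by rw [hn]; abel
    have hb' : b' = b + i q := by rw [hq]; abel
    rw [ha', hb']
    have e1 : fE (a + i n) (b + i q) (i m) =
        fE a (b + i q) (i m) + fE (i n) (b + i q) (i m) :=
      (triE.lin₁ _ _).map_add a (i n)
    have e2 : fE a (b + i q) (i m) = fE a b (i m) + fE a (i q) (i m) :=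
      (triE.lin₂ _ _).map_add b (i q)
    have e3 : fE (i n) (b + i q) (i m) = fE (i n) b (i m) + fE (i n) (i q) (i m) :=
      (triE.lin₂ _ _).map_add b (i q)
    rw [e1, e2, e3, z1, z2, z1, add_zero, add_zero, add_zero]
  refine ⟨hrange, ?_⟩
  intro ρ hρ
  have hpsf : ∀ x₁ x₂ x₃ : g, p (fE (s x₁) (s x₂) (s x₃)) = p (s (f x₁ x₂ x₃)) := by
    intro x₁ x₂ x₃
    rw [hpb, hsec, hsec, hsec, hsec]
  have hpT : ∀ x : g, p (TE (s x)) = p (s (T x)) := by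
    intro x
    rw [hprb, hsec, hsec]
  refine ⟨⟨?_, ?_, ?_, ?_, ?_, ?_⟩, hlinTM, ?_⟩
  · -- lin₁
    intro y m
    constructor
    · intro a b
      apply hinj
      simp only [hρ, hi.map_add, hs_lin.map_add]
      exact (triE.lin₁ (s y) (i m)).map_add (s a) (s b)
    · intro c a
      apply hinj
      simp only [hρ, hi.map_smul, hs_lin.map_smul]
      exact (triE.lin₁ (s y) (i m)).map_smul c (s a)
  · -- lin₂
    intro x m
    constructor
    · intro a b
      apply hinj
      simp only [hρ, hi.map_add, hs_lin.map_add]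
      exact (triE.lin₂ (s x) (i m)).map_add (s a) (s b)
    · intro c a
      apply hinj
      simp only [hρ, hi.map_smul, hs_lin.map_smul]
      exact (triE.lin₂ (s x) (i m)).map_smul c (s a)
  · -- lin₃
    intro x y
    constructor
    · intro a b
      apply hinj
      simp only [hρ, hi.map_add]
      exact (triE.lin₃ (s x) (s y)).map_add (i a) (i b)
    · intro c a
      apply hinj
      simp only [hρ, hi.map_smul]
      exact (triE.lin₃ (s x) (s y)).map_smul c (i a)
  · -- alt
    intro x m
    apply hinj
    rw [hρ, altE.alt₁₂, hi.map_zero]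
  · -- rep₁
    intro x₁ x₂ x₃ x₄ m
    apply hinj
    have t1 : fE (fE (s x₁) (s x₂) (s x₃)) (s x₄) (i m) =
        fE (s (f x₁ x₂ x₃)) (s x₄) (i m) :=
      hcg _ _ _ _ m (hpsf x₁ x₂ x₃) rfl
    have t2 : fE (s x₃) (fE (s x₁) (s x₂) (s x₄)) (i m) =
        fE (s x₃) (s (f x₁ x₂ x₄)) (i m) :=
      hcg _ _ _ _ m rfl (hpsf x₁ x₂ x₄)
    calc i (ρ x₁ x₂ (ρ x₃ x₄ m))
        = fE (s x₁) (s x₂) (fE (s x₃) (s x₄) (i m)) := by rw [hρ, hρ]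
      _ = fE (fE (s x₁) (s x₂) (s x₃)) (s x₄) (i m) +
            fE (s x₃) (fE (s x₁) (s x₂) (s x₄)) (i m) +
            fE (s x₃) (s x₄) (fE (s x₁) (s x₂) (i m)) := fiE _ _ _ _ _
      _ = fE (s (f x₁ x₂ x₃)) (s x₄) (i m) + fE (s x₃) (s (f x₁ x₂ x₄)) (i m) +
            fE (s x₃) (s x₄) (i (ρ x₁ x₂ m)) := by
          rw [t1, t2, ← hρ x₁ x₂ m]
      _ = i (ρ (f x₁ x₂ x₃) x₄ m + ρ x₃ (f x₁ x₂ x₄) m + ρ x₃ x₄ (ρ x₁ x₂ m)) := by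
          rw [hi.map_add, hi.map_add]
          simp only [hρ]
  · -- rep₂
    intro x₁ x₂ x₃ x₄ m
    apply hinj
    calc i (ρ x₁ (f x₂ x₃ x₄) m)
        = fE (s x₁) (s (f x₂ x₃ x₄)) (i m) := hρ _ _ _
      _ = fE (s x₁) (fE (s x₂) (s x₃) (s x₄)) (i m) :=
          (hcg _ _ _ _ m rfl (hpsf x₂ x₃ x₄)).symm
      _ = - fE (s x₁) (i m) (fE (s x₂) (s x₃) (s x₄)) := by
          rw [sw23 (s x₁) (i m) (fE (s x₂) (s x₃) (s x₄))]
      _ = -(fE (fE (s x₁) (i m) (s x₂)) (s x₃) (s x₄) +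
            fE (s x₂) (fE (s x₁) (i m) (s x₃)) (s x₄) +
            fE (s x₂) (s x₃) (fE (s x₁) (i m) (s x₄))) := by
          rw [fiE]
      _ = -(fE (-(i (ρ x₁ x₂ m))) (s x₃) (s x₄) +
            fE (s x₂) (-(i (ρ x₁ x₃ m))) (s x₄) +
            fE (s x₂) (s x₃) (-(i (ρ x₁ x₄ m)))) := by
          rw [sw23 (s x₁) (s x₂) (i m), sw23 (s x₁) (s x₃) (i m),
            sw23 (s x₁) (s x₄) (i m), ← hρ x₁ x₂ m, ← hρ x₁ x₃ m, ← hρ x₁ x₄ m]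
      _ = fE (s x₃) (s x₄) (i (ρ x₁ x₂ m)) - fE (s x₂) (s x₄) (i (ρ x₁ x₃ m)) +
            fE (s x₂) (s x₃) (i (ρ x₁ x₄ m)) := by
          have n1 : fE (-(i (ρ x₁ x₂ m))) (s x₃) (s x₄) =
              - fE (i (ρ x₁ x₂ m)) (s x₃) (s x₄) := (triE.lin₁ _ _).map_neg _
          have n2 : fE (s x₂) (-(i (ρ x₁ x₃ m))) (s x₄) =
              - fE (s x₂) (i (ρ x₁ x₃ m)) (s x₄) := (triE.lin₂ _ _).map_neg _
          have n3 : fE (s x₂) (s x₃) (-(i (ρ x₁ x₄ m))) =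
              - fE (s x₂) (s x₃) (i (ρ x₁ x₄ m)) := (triE.lin₃ _ _).map_neg _
          rw [n1, n2, n3, cyc (s x₃) (s x₄) (i (ρ x₁ x₂ m)),
            sw23 (s x₂) (s x₄) (i (ρ x₁ x₃ m))]
          abel
      _ = i (ρ x₃ x₄ (ρ x₁ x₂ m) - ρ x₂ x₄ (ρ x₁ x₃ m) + ρ x₂ x₃ (ρ x₁ x₄ m)) := by
          rw [hi.map_add, hi.map_sub]
          simp only [hρ]
  · -- rb
    intro x y m
    apply hinj
    have u1 : fE (TE (s x)) (TE (s y)) (i m) = fE (s (T x)) (s (T y)) (i m) :=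
      hcg _ _ _ _ _ (hpT x) (hpT y)
    have u2 : ∀ q, fE (TE (s x)) (s y) (i q) = fE (s (T x)) (s y) (i q) :=
      fun q => hcg _ _ _ _ _ (hpT x) rfl
    have u3 : ∀ q, fE (s x) (TE (s y)) (i q) = fE (s x) (s (T y)) (i q) :=
      fun q => hcg _ _ _ _ _ rfl (hpT y)
    calc i (ρ (T x) (T y) (TM m))
        = fE (s (T x)) (s (T y)) (i (TM m)) := hρ _ _ _
      _ = fE (TE (s x)) (TE (s y)) (i (TM m)) :=
          (hcg _ _ _ _ _ (hpT x) (hpT y)).symm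
      _ = fE (TE (s x)) (TE (s y)) (TE (i m)) := by rw [← hirb]
      _ = TE (fE (TE (s x)) (TE (s y)) (i m) + fE (TE (s x)) (s y) (TE (i m)) +
            fE (s x) (TE (s y)) (TE (i m)) + lam • fE (TE (s x)) (s y) (i m) +
            lam • fE (s x) (TE (s y)) (i m) + lam • fE (s x) (s y) (TE (i m)) +
            (lam * lam) • fE (s x) (s y) (i m)) := htot.rb (s x) (s y) (i m)
      _ = TE (i (ρ (T x) (T y) m) + i (ρ (T x) y (TM m)) + i (ρ x (T y) (TM m)) +
            lam • i (ρ (T x) y m) + lam • i (ρ x (T y) m) +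
            lam • i (ρ x y (TM m)) + (lam * lam) • i (ρ x y m)) := by
          rw [hirb, u1, u2 (TM m), u2 m, u3 (TM m), u3 m,
            ← hρ (T x) (T y) m, ← hρ (T x) y (TM m), ← hρ x (T y) (TM m),
            ← hρ (T x) y m, ← hρ x (T y) m, ← hρ x y (TM m), ← hρ x y m]
      _ = TE (i (ρ (T x) (T y) m + ρ (T x) y (TM m) + ρ x (T y) (TM m) +
            lam • ρ (T x) y m + lam • ρ x (T y) m + lam • ρ x y (TM m) +
            (lam * lam) • ρ x y m)) := by
          simp only [hi.map_add, hi.map_smul]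
      _ = i (TM (ρ (T x) (T y) m + ρ (T x) y (TM m) + ρ x (T y) (TM m) +
            lam • ρ (T x) y m + lam • ρ x (T y) m + lam • ρ x y (TM m) +
            (lam * lam) • ρ x y m)) := hirb _
end

section
/- Let 0 → (M,T_M) →^i (ĝ,[·,·,·]_ĝ,T̂) →^p (g,[·,·,·]_g,T) → 0 be an abelian extension of Rota-Baxter 3-Lie algebras of weight λ with section s, and let (M,ρ,T_M) be the induced representation given by i(ρ(x,y)m) = [s(x),s(y),i(m)]_ĝ. Define ψ : g×g×g → M and χ : g → M by i(ψ(x,y,z)) = [s(x),s(y),s(z)]_ĝ − s([x,y,z]_g) and i(χ(x)) = T̂(s(x)) − s(T(x)) (both right-hand sides lie in im i = ker p). Then (ψ,χ) is a 2-cocycle of the Rota-Baxter 3-Lie algebra (g,T) with coefficients in (M,ρ,T_M). -/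
namespace RBPaper

section MyHelpers

variable {k : Type*} [Field k]
variable {g M : Type*} [AddCommGroup g] [Module k g] [AddCommGroup M] [Module k M]

theorem Trilinear.add1 {f : g → g → g → M} (h : Trilinear k f) (x x' y z : g) :
    f (x + x') y z = f x y z + f x' y z := (h.lin₁ y z).map_add x x'

theorem Trilinear.add2 {f : g → g → g → M} (h : Trilinear k f) (x y y' z : g) :
    f x (y + y') z = f x y z + f x y' z := (h.lin₂ x z).map_add y y'

theorem Trilinear.add3 {f : g → g → g → M} (h : Trilinear k f) (x y z z' : g) :
    f x y (z + z') = f x y z + f x y z' := (h.lin₃ x y).map_add z z'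

theorem Trilinear.smul1 {f : g → g → g → M} (h : Trilinear k f) (c : k) (x y z : g) :
    f (c • x) y z = c • f x y z := (h.lin₁ y z).map_smul c x

theorem Trilinear.smul2 {f : g → g → g → M} (h : Trilinear k f) (c : k) (x y z : g) :
    f x (c • y) z = c • f x y z := (h.lin₂ x z).map_smul c y

theorem Trilinear.smul3 {f : g → g → g → M} (h : Trilinear k f) (c : k) (x y z : g) :
    f x y (c • z) = c • f x y z := (h.lin₃ x y).map_smul c z

theorem Trilinear.sub3 {f : g → g → g → M} (h : Trilinear k f) (x y u v : g) :
    f x y (u - v) = f x y u - f x y v := (h.lin₃ x y).map_sub u v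

theorem Trilinear.zero3 {f : g → g → g → M} (h : Trilinear k f) (x y : g) :
    f x y 0 = 0 := (h.lin₃ x y).map_zero

theorem tri_swap12 {f : g → g → g → M} (h : Trilinear k f) (ha : Alternating3 f)
    (a b c : g) : f b a c = - f a b c := by
  have e : f (a + b) (a + b) c = 0 := ha.alt₁₂ _ _
  rw [h.add1, h.add2, h.add2, ha.alt₁₂ a c, ha.alt₁₂ b c, zero_add, add_zero] at e
  exact eq_neg_of_add_eq_zero_right e

theorem tri_swap23 {f : g → g → g → M} (h : Trilinear k f) (ha : Alternating3 f)
    (a b c : g) : f a c b = - f a b c := by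
  have e : f a (b + c) (b + c) = 0 := ha.alt₂₃ _ _
  rw [h.add2, h.add3, h.add3, ha.alt₂₃ a b, ha.alt₂₃ a c, zero_add, add_zero] at e
  exact eq_neg_of_add_eq_zero_right e

theorem tri_cyc_s11 {f : g → g → g → M} (h : Trilinear k f) (ha : Alternating3 f)
    (a b c : g) : f a b c = f b c a := by
  rw [tri_swap12 h ha c b a, tri_swap23 h ha c a b, tri_swap12 h ha a c b,
    tri_swap23 h ha a b c, neg_neg, neg_neg]

theorem tri_cyc' {f : g → g → g → M} (h : Trilinear k f) (ha : Alternating3 f)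
    (a b c : g) : f a b c = f c a b := by
  rw [tri_cyc_s11 h ha, tri_cyc_s11 h ha]

end MyHelpers

end RBPaper

open RBPaper

/-- the pair `(ψ, χ)` obtained from a section `s` of an abelian
extension of Rota-Baxter 3-Lie algebras of weight `lam`, via
`i (ψ x y z) = [s x, s y, s z] − s [x,y,z]` and `i (χ x) = T̂(s x) − s (T x)`,
is a 2-cocycle with coefficients in the induced representation `(M, ρ, TM)`. -/
theorem abelianExt_gives_twoCocycle
    {k : Type*} [Field k] [CharZero k]
    {g M E : Type*} [AddCommGroup g] [Module k g] [AddCommGroup M] [Module k M]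
    [AddCommGroup E] [Module k E]
    (lam : k) (f : g → g → g → g) (T : g → g) (TM : M → M)
    (fE : E → E → E → E) (TE : E → E) (i : M → E) (p : E → g)
    (hext : IsAbelianExt k lam f T TM fE TE i p)
    (s : g → E) (hs_lin : IsLinearMap k s) (hsec : ∀ x, p (s x) = x)
    (ρ : g → g → M → M)
    (hρ : ∀ x y m, i (ρ x y m) = fE (s x) (s y) (i m))
    (ψ : g → g → g → M) (χ : g → M)
    (hψ : ∀ x y z, i (ψ x y z) = fE (s x) (s y) (s z) - s (f x y z))
    (hχ : ∀ x, i (χ x) = TE (s x) - s (T x)) :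
    IsTwoCocycle k lam f T ρ TM ψ χ := by
  obtain ⟨hbase, htotal, TML, iL, pL, hTEi, pbr, prb, inj, surj, hexact, habel⟩ := hext
  have fEtri := htotal.lie.tri
  have fEalt := htotal.lie.alt
  have fEfi := htotal.lie.fi
  have ftri := hbase.lie.tri
  have falt := hbase.lie.alt
  have ffi := hbase.lie.fi
  have TEL := htotal.linT
  have TL := hbase.linT
  have sL := hs_lin
  have izero : i (0 : M) = 0 := iL.map_zero
  have A1 : ∀ a b c, fE (s a) (s b) (s c) = i (ψ a b c) + s (f a b c) := by
    intro a b c; rw [hψ a b c]; abel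
  have A2 : ∀ a b m, fE (s a) (s b) (i m) = i (ρ a b m) := fun a b m => (hρ a b m).symm
  have A3 : ∀ b c m, fE (i m) (s b) (s c) = i (ρ b c m) := by
    intro b c m; rw [tri_cyc_s11 fEtri fEalt]; exact (hρ b c m).symm
  have A4 : ∀ a c m, fE (s a) (i m) (s c) = i (ρ c a m) := by
    intro a c m; rw [tri_cyc_s11 fEtri fEalt, tri_cyc_s11 fEtri fEalt]; exact (hρ c a m).symm
  have Z3 : ∀ (w : E) n q, fE w (i n) (i q) = 0 := habel
  have Z2 : ∀ (w : E) n q, fE (i n) w (i q) = 0 := by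
    intro w n q; rw [tri_swap12 fEtri fEalt, Z3, neg_zero]
  have Z1 : ∀ (w : E) n q, fE (i n) (i q) w = 0 := by
    intro w n q; rw [tri_cyc_s11 fEtri fEalt]; exact Z2 w q n
  have ρzero : ∀ a b, ρ a b (0 : M) = 0 := by
    intro a b
    apply inj
    rw [hρ, izero]
    exact fEtri.zero3 _ _
  have master : ∀ a b c m n q, fE (s a + i m) (s b + i n) (s c + i q) =
      i (ρ b c m) + i (ρ c a n) + i (ρ a b q) + i (ψ a b c) + s (f a b c) := by
    intro a b c m n q
    have e : fE (s a + i m) (s b + i n) (s c + i q) =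
        fE (s a) (s b) (s c) + fE (s a) (s b) (i q) + fE (s a) (i n) (s c) +
        fE (s a) (i n) (i q) + fE (i m) (s b) (s c) + fE (i m) (s b) (i q) +
        fE (i m) (i n) (s c) + fE (i m) (i n) (i q) := by
      rw [fEtri.add1, fEtri.add2, fEtri.add2, fEtri.add3, fEtri.add3, fEtri.add3,
        fEtri.add3]
      abel
    rw [e, A1, A2, A4, Z3, A3, Z2, Z1, Z3]
    abel
  have Mxy : ∀ a b c m n, fE (s a + i m) (s b + i n) (s c) =
      i (ρ b c m) + i (ρ c a n) + i (ψ a b c) + s (f a b c) := by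
    intro a b c m n; simpa [izero, ρzero] using master a b c m n 0
  have Mxz : ∀ a b c m q, fE (s a + i m) (s b) (s c + i q) =
      i (ρ b c m) + i (ρ a b q) + i (ψ a b c) + s (f a b c) := by
    intro a b c m q; simpa [izero, ρzero] using master a b c m 0 q
  have Myz : ∀ a b c n q, fE (s a) (s b + i n) (s c + i q) =
      i (ρ c a n) + i (ρ a b q) + i (ψ a b c) + s (f a b c) := by
    intro a b c n q; simpa [izero, ρzero] using master a b c 0 n q
  have Mx : ∀ a b c m, fE (s a + i m) (s b) (s c) =
      i (ρ b c m) + i (ψ a b c) + s (f a b c) := by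
    intro a b c m; simpa [izero, ρzero] using master a b c m 0 0
  have My : ∀ a b c n, fE (s a) (s b + i n) (s c) =
      i (ρ c a n) + i (ψ a b c) + s (f a b c) := by
    intro a b c n; simpa [izero, ρzero] using master a b c 0 n 0
  have Mz : ∀ a b c q, fE (s a) (s b) (s c + i q) =
      i (ρ a b q) + i (ψ a b c) + s (f a b c) := by
    intro a b c q; simpa [izero, ρzero] using master a b c 0 0 q
  have hTEs : ∀ a, TE (s a) = s (T a) + i (χ a) := by
    intro a; rw [hχ]; abel
  refine ⟨⟨?_, ?_, ?_⟩, ⟨?_, ?_, ?_⟩, ⟨?_, ?_⟩, ?_, ?_⟩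
  · -- ψ linear in slot 1
    intro y z
    constructor
    · intro a b
      show ψ (a + b) y z = ψ a y z + ψ b y z
      apply inj
      simp only [iL.map_add, hψ]
      rw [sL.map_add, ftri.add1, sL.map_add, fEtri.add1]
      abel
    · intro c a
      show ψ (c • a) y z = c • ψ a y z
      apply inj
      simp only [iL.map_smul, hψ]
      rw [sL.map_smul, ftri.smul1, sL.map_smul, fEtri.smul1]
      module
  · -- ψ linear in slot 2
    intro x z
    constructor
    · intro a b
      show ψ x (a + b) z = ψ x a z + ψ x b z
      apply inj
      simp only [iL.map_add, hψ]
      rw [sL.map_add, ftri.add2, sL.map_add, fEtri.add2]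
      abel
    · intro c a
      show ψ x (c • a) z = c • ψ x a z
      apply inj
      simp only [iL.map_smul, hψ]
      rw [sL.map_smul, ftri.smul2, sL.map_smul, fEtri.smul2]
      module
  · -- ψ linear in slot 3
    intro x y
    constructor
    · intro a b
      show ψ x y (a + b) = ψ x y a + ψ x y b
      apply inj
      simp only [iL.map_add, hψ]
      rw [sL.map_add, ftri.add3, sL.map_add, fEtri.add3]
      abel
    · intro c a
      show ψ x y (c • a) = c • ψ x y a
      apply inj
      simp only [iL.map_smul, hψ]
      rw [sL.map_smul, ftri.smul3, sL.map_smul, fEtri.smul3]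
      module
  · -- alt₁₂
    intro a b
    apply inj
    rw [hψ, fEalt.alt₁₂, falt.alt₁₂, sL.map_zero, izero, sub_zero]
  · -- alt₂₃
    intro a b
    apply inj
    rw [hψ, fEalt.alt₂₃, falt.alt₂₃, sL.map_zero, izero, sub_zero]
  · -- alt₁₃
    intro a b
    apply inj
    rw [hψ, fEalt.alt₁₃, falt.alt₁₃, sL.map_zero, izero, sub_zero]
  · -- χ additive
    intro a b
    apply inj
    simp only [iL.map_add, hχ]
    rw [sL.map_add, TEL.map_add, TL.map_add, sL.map_add]
    abel
  · -- χ smul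
    intro c a
    apply inj
    simp only [iL.map_smul, hχ]
    rw [sL.map_smul, TEL.map_smul, TL.map_smul, sL.map_smul]
    module
  · -- cocycle condition C1
    intro x₁ x₂ x₃ x₄ x₅
    apply inj
    simp only [iL.map_add, hρ, hψ, fEtri.sub3]
    rw [fEfi (s x₁) (s x₂) (s x₃) (s x₄) (s x₅), ffi x₁ x₂ x₃ x₄ x₅]
    simp only [sL.map_add]
    rw [tri_cyc' fEtri fEalt (s x₄) (s x₅) (fE (s x₁) (s x₂) (s x₃)),
      tri_cyc' fEtri fEalt (s x₄) (s x₅) (s (f x₁ x₂ x₃)),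
      tri_cyc_s11 fEtri fEalt (s x₅) (s x₃) (fE (s x₁) (s x₂) (s x₄)),
      tri_cyc_s11 fEtri fEalt (s x₅) (s x₃) (s (f x₁ x₂ x₄))]
    abel
  · -- cocycle condition C2
    intro x y z
    have key := htotal.rb (s x) (s y) (s z)
    have E0 : fE (TE (s x)) (TE (s y)) (TE (s z)) =
        i (ρ (T y) (T z) (χ x)) + i (ρ (T z) (T x) (χ y)) + i (ρ (T x) (T y) (χ z)) +
        i (ψ (T x) (T y) (T z)) + s (f (T x) (T y) (T z)) := by
      rw [hTEs x, hTEs y, hTEs z]; exact master (T x) (T y) (T z) (χ x) (χ y) (χ z)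
    have E1 : fE (TE (s x)) (TE (s y)) (s z) =
        i (ρ (T y) z (χ x)) + i (ρ z (T x) (χ y)) + i (ψ (T x) (T y) z) +
        s (f (T x) (T y) z) := by
      rw [hTEs x, hTEs y]; exact Mxy (T x) (T y) z (χ x) (χ y)
    have E2 : fE (TE (s x)) (s y) (TE (s z)) =
        i (ρ y (T z) (χ x)) + i (ρ (T x) y (χ z)) + i (ψ (T x) y (T z)) +
        s (f (T x) y (T z)) := by
      rw [hTEs x, hTEs z]; exact Mxz (T x) y (T z) (χ x) (χ z)
    have E3 : fE (s x) (TE (s y)) (TE (s z)) =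
        i (ρ (T z) x (χ y)) + i (ρ x (T y) (χ z)) + i (ψ x (T y) (T z)) +
        s (f x (T y) (T z)) := by
      rw [hTEs y, hTEs z]; exact Myz x (T y) (T z) (χ y) (χ z)
    have E4 : fE (TE (s x)) (s y) (s z) =
        i (ρ y z (χ x)) + i (ψ (T x) y z) + s (f (T x) y z) := by
      rw [hTEs x]; exact Mx (T x) y z (χ x)
    have E5 : fE (s x) (TE (s y)) (s z) =
        i (ρ z x (χ y)) + i (ψ x (T y) z) + s (f x (T y) z) := by
      rw [hTEs y]; exact My x (T y) z (χ y)
    have E6 : fE (s x) (s y) (TE (s z)) =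
        i (ρ x y (χ z)) + i (ψ x y (T z)) + s (f x y (T z)) := by
      rw [hTEs z]; exact Mz x y (T z) (χ z)
    apply inj
    have hL : i (ρ (T x) (T y) (χ z) + ρ (T z) (T x) (χ y) + ρ (T y) (T z) (χ x) +
        ψ (T x) (T y) (T z)) =
        fE (TE (s x)) (TE (s y)) (TE (s z)) - s (f (T x) (T y) (T z)) := by
      simp only [iL.map_add]
      rw [E0]; abel
    rw [hL]
    simp only [iL.map_add, iL.map_smul]
    rw [key, E1, E2, E3, E4, E5, E6, A1 x y z]
    simp only [TEL.map_add, TEL.map_smul, hTEi, hTEs]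
    simp only [TML.map_add, iL.map_add]
    rw [hbase.rb x y z]
    simp only [TL.map_add, TL.map_smul, sL.map_add, sL.map_smul]
    module
end
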